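/- arXiv:2105.07943 — 8 statements merged into one kernel-verified Lean document; each statement's English description precedes it below -/
import Mathlib

section
/- Let Γ = ⟨α,β⟩ with α,β coprime, 1 < α < β. Let E = {0, x₁, …, x_s} be a set of gaps of Γ with xᵢ = αβ - aᵢα - bᵢβ (0 < aᵢ < β, 0 < bᵢ < α) and a₁ < a₂ < ⋯ < a_s. Then E is Γ-lean (i.e. |xᵢ - xⱼ| ∉ Γ for all 0 ≤ i < j ≤ s, where x₀ = 0) if and only if b₁ > b₂ > ⋯ > b_s. -/
/-- The numerical semigroup generated by `α` and `β`. -/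
def SG (α β : ℕ) : Set ℕ := {n | ∃ x y : ℕ, n = x * α + y * β}

lemma key_not_in_SG (α β : ℕ) (hα : 0 < α) (hβ : 0 < β) (hcop : Nat.Coprime α β)
    (A B : ℤ) (hA0 : 0 < A) (hAβ : A < β) (hB0 : 0 < B) (hBα : B < α) :
    (A * α - B * β).natAbs ∉ SG α β := by
  rintro ⟨u, v, huv⟩
  have hcopZ : IsCoprime (α : ℤ) (β : ℤ) := by
    rw [Int.isCoprime_iff_gcd_eq_one]; exact_mod_cast hcop
  have hαZ : (0:ℤ) < α := by exact_mod_cast hα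
  have hβZ : (0:ℤ) < β := by exact_mod_cast hβ
  rcases Int.natAbs_eq (A * α - B * β) with h | h
  · rw [huv] at h
    have heq : (A - u) * α = β * (B + v) := by push_cast at h; linarith
    have hdvd : (β:ℤ) ∣ (A - u) * α := ⟨B + v, heq⟩
    have hdvd2 : (β:ℤ) ∣ (A - u) := hcopZ.symm.dvd_of_dvd_mul_right hdvd
    have hpos : (0:ℤ) < β * (B + v) := by positivity
    have hAu : 0 < A - u := by nlinarith
    have := Int.le_of_dvd hAu hdvd2
    have hu : (0:ℤ) ≤ (u:ℤ) := Int.natCast_nonneg u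
    linarith
  · rw [huv] at h
    have heq : (B - v) * β = α * (A + u) := by push_cast at h; linarith
    have hdvd : (α:ℤ) ∣ (B - v) * β := ⟨A + u, heq⟩
    have hdvd2 : (α:ℤ) ∣ (B - v) := hcopZ.dvd_of_dvd_mul_right hdvd
    have hpos : (0:ℤ) < α * (A + u) := by positivity
    have hBv : 0 < B - v := by nlinarith
    have := Int.le_of_dvd hBv hdvd2
    have hv : (0:ℤ) ≤ (v:ℤ) := Int.natCast_nonneg v
    linarith

theorem lean_iff_b_decreasing (α β s : ℕ) (h1 : 1 < α) (h2 : α < β)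
    (hcop : Nat.Coprime α β) (x a b : ℕ → ℕ)
    (hx0 : x 0 = 0)
    (hgap : ∀ i, 1 ≤ i → i ≤ s → x i ∉ SG α β)
    (hcoord : ∀ i, 1 ≤ i → i ≤ s →
      0 < a i ∧ a i < β ∧ 0 < b i ∧ b i < α ∧
        (x i : ℤ) = (α : ℤ) * β - a i * α - b i * β)
    (hamono : ∀ i j, 1 ≤ i → i < j → j ≤ s → a i < a j) :
    (∀ i j, i < j → j ≤ s → ((x i : ℤ) - x j).natAbs ∉ SG α β) ↔
      (∀ i j, 1 ≤ i → i < j → j ≤ s → b j < b i) := by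
  constructor
  · intro hlean i j hi hij hjs
    by_contra hb
    push_neg at hb
    obtain ⟨hai0, haiβ, hbi0, hbiα, ei⟩ := hcoord i hi (le_of_lt (lt_of_lt_of_le hij hjs))
    obtain ⟨haj0, hajβ, hbj0, hbjα, ej⟩ := hcoord j (le_trans hi (le_of_lt hij)) hjs
    have ha : a i < a j := hamono i j hi hij hjs
    apply hlean i j hij hjs
    refine ⟨a j - a i, b j - b i, ?_⟩
    have hd : (x i : ℤ) - x j = (((a j - a i) * α + (b j - b i) * β : ℕ) : ℤ) := by
      push_cast [Nat.cast_sub (le_of_lt ha), Nat.cast_sub hb]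
      linarith
    rw [hd, Int.natAbs_natCast]
  · intro hb i j hij hjs hmem
    rcases Nat.eq_zero_or_pos i with hi0 | hi
    · subst hi0
      have hj : 1 ≤ j := hij
      obtain ⟨u, v, huv⟩ := hmem
      apply hgap j hj hjs
      refine ⟨u, v, ?_⟩
      have : ((x 0 : ℤ) - x j).natAbs = x j := by rw [hx0]; simp
      omega
    · obtain ⟨hai0, haiβ, hbi0, hbiα, ei⟩ := hcoord i hi (le_of_lt (lt_of_lt_of_le hij hjs))
      obtain ⟨haj0, hajβ, hbj0, hbjα, ej⟩ := hcoord j (le_trans hi (le_of_lt hij)) hjs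
      have ha : a i < a j := hamono i j hi hij hjs
      have hbij : b j < b i := hb i j hi hij hjs
      have hd : (x i : ℤ) - x j = ((a j : ℤ) - a i) * α - ((b i : ℤ) - b j) * β := by
        linarith [ei, ej]
      rw [hd] at hmem
      exact key_not_in_SG α β (by omega) (by omega) hcop _ _
        (by omega)
        (by have : (a j : ℤ) < β := by exact_mod_cast hajβ
            have : (0:ℤ) ≤ a i := Int.natCast_nonneg _
            omega)
        (by omega)
        (by have : (b i : ℤ) < α := by exact_mod_cast hbiα
            have : (0:ℤ) ≤ b j := Int.natCast_nonneg _
            omega) hmem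
end

section
/- Let Γ be a numerical semigroup. A normalized Γ-semimodule (a Γ-semimodule containing 0) is minimally generated by its set of generators E if and only if E is Γ-lean; consequently, the map sending a normalized Γ-semimodule to its minimal system of generators is a bijection between normalized Γ-semimodules and Γ-lean subsets of ℕ containing 0. -/
/-- The set `x + Γ` for `x : ℕ` and `Γ ⊆ ℕ`. -/
def shiftN (S : Set ℕ) (x : ℕ) : Set ℕ := {n | ∃ γ ∈ S, n = x + γ}

/-- `E` is a system of generators of the `S`-semimodule `Δ`. -/
def GeneratesBy (S E Δ : Set ℕ) : Prop := Δ = ⋃ x ∈ E, shiftN S x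

/-- `E` is an `S`-lean set: the absolute difference of any two distinct
elements of `E` is not in `S`. -/
def GLean (S E : Set ℕ) : Prop :=
  ∀ x ∈ E, ∀ y ∈ E, x ≠ y → ((x : ℤ) - (y : ℤ)).natAbs ∉ S

lemma mem_gen {S E : Set ℕ} {n : ℕ} :
    n ∈ (⋃ x ∈ E, shiftN S x) ↔ ∃ x ∈ E, ∃ γ ∈ S, n = x + γ := by
  simp [shiftN]

lemma lean_min {S E Δ : Set ℕ} (h0 : 0 ∈ S) (hgen : GeneratesBy S E Δ)
    (hl : GLean S E) : ∀ E' ⊂ E, ¬ GeneratesBy S E' Δ := by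
  intro E' hss hgen'
  obtain ⟨hsub, hne⟩ := hss
  obtain ⟨x, hxE, hxE'⟩ := Set.not_subset.mp hne
  have hxΔ : x ∈ Δ := by
    rw [hgen]; exact mem_gen.mpr ⟨x, hxE, 0, h0, by omega⟩
  rw [hgen'] at hxΔ
  obtain ⟨y, hyE', γ, hγ, heq⟩ := mem_gen.mp hxΔ
  by_cases hxy : x = y
  · exact hxE' (hxy ▸ hyE')
  · have habs : ((x : ℤ) - (y : ℤ)).natAbs = γ := by omega
    exact hl x hxE y (hsub hyE') hxy (habs ▸ hγ)

lemma min_lean_aux {S E Δ : Set ℕ} (hadd : ∀ a ∈ S, ∀ b ∈ S, a + b ∈ S)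
    (hgen : GeneratesBy S E Δ) (hmin : ∀ E' ⊂ E, ¬ GeneratesBy S E' Δ)
    {x y : ℕ} (hx : x ∈ E) (hy : y ∈ E) (hlt : y < x) (hd : x - y ∈ S) : False := by
  apply hmin (E \ {x}) ⟨Set.diff_subset, fun hsub => (hsub hx).2 rfl⟩
  rw [hgen]
  apply Set.Subset.antisymm
  · intro n hn
    obtain ⟨z, hz, γ, hγ, rfl⟩ := mem_gen.mp hn
    by_cases hzx : z = x
    · subst hzx
      refine mem_gen.mpr ⟨y, ⟨hy, ?_⟩, (z - y) + γ, hadd _ hd _ hγ, by omega⟩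
      simp only [Set.mem_singleton_iff]; omega
    · exact mem_gen.mpr ⟨z, ⟨hz, hzx⟩, γ, hγ, rfl⟩
  · intro n hn
    obtain ⟨z, hz, γ, hγ, rfl⟩ := mem_gen.mp hn
    exact mem_gen.mpr ⟨z, hz.1, γ, hγ, rfl⟩

lemma min_lean {S E Δ : Set ℕ} (hadd : ∀ a ∈ S, ∀ b ∈ S, a + b ∈ S)
    (hgen : GeneratesBy S E Δ) (hmin : ∀ E' ⊂ E, ¬ GeneratesBy S E' Δ) :
    GLean S E := by
  intro x hx y hy hne hmem
  rcases Nat.lt_or_ge x y with h | h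
  · have habs : ((x : ℤ) - (y : ℤ)).natAbs = y - x := by omega
    exact min_lean_aux hadd hgen hmin hy hx h (habs ▸ hmem)
  · have hlt : y < x := by omega
    have habs : ((x : ℤ) - (y : ℤ)).natAbs = x - y := by omega
    exact min_lean_aux hadd hgen hmin hx hy hlt (habs ▸ hmem)

/-- The minimal generating set of a semimodule. -/
def minGen (S Δ : Set ℕ) : Set ℕ :=
  {x ∈ Δ | ¬ ∃ y ∈ Δ, ∃ γ ∈ S, γ ≠ 0 ∧ x = y + γ}

lemma minGen_generates {S Δ : Set ℕ} (h0 : 0 ∈ S)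
    (hadd : ∀ a ∈ S, ∀ b ∈ S, a + b ∈ S)
    (hcl : ∀ d ∈ Δ, ∀ γ ∈ S, d + γ ∈ Δ) :
    GeneratesBy S (minGen S Δ) Δ := by
  have key : ∀ n, n ∈ Δ → n ∈ (⋃ x ∈ minGen S Δ, shiftN S x) := by
    intro n
    induction n using Nat.strong_induction_on with
    | _ n ih =>
      intro hn
      by_cases hE : n ∈ minGen S Δ
      · exact mem_gen.mpr ⟨n, hE, 0, h0, by omega⟩
      · have hex : ∃ y ∈ Δ, ∃ γ ∈ S, γ ≠ 0 ∧ n = y + γ := by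
          by_contra h; exact hE ⟨hn, h⟩
        obtain ⟨y, hy, γ, hγ, hγ0, rfl⟩ := hex
        obtain ⟨z, hz, γ', hγ', rfl⟩ := mem_gen.mp (ih y (by omega) hy)
        exact mem_gen.mpr ⟨z, hz, γ' + γ, hadd _ hγ' _ hγ, by omega⟩
  ext n
  constructor
  · exact key n
  · intro hn
    obtain ⟨x, hx, γ, hγ, rfl⟩ := mem_gen.mp hn
    exact hcl _ hx.1 _ hγ

lemma minGen_lean {S Δ : Set ℕ} : GLean S (minGen S Δ) := by
  intro x hx y hy hne hmem
  rcases Nat.lt_or_ge x y with h | h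
  · have habs : ((x : ℤ) - (y : ℤ)).natAbs = y - x := by omega
    exact hy.2 ⟨x, hx.1, y - x, habs ▸ hmem, by omega, by omega⟩
  · have habs : ((x : ℤ) - (y : ℤ)).natAbs = x - y := by omega
    exact hx.2 ⟨y, hy.1, x - y, habs ▸ hmem, by omega, by omega⟩

lemma lean_gen_unique {S Δ E : Set ℕ} (h0 : 0 ∈ S)
    (hadd : ∀ a ∈ S, ∀ b ∈ S, a + b ∈ S)
    (hl : GLean S E) (hgen : GeneratesBy S E Δ) : E = minGen S Δ := by
  ext x
  constructor
  · intro hx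
    refine ⟨by rw [hgen]; exact mem_gen.mpr ⟨x, hx, 0, h0, by omega⟩, ?_⟩
    rintro ⟨y, hy, γ, hγ, hγ0, rfl⟩
    rw [hgen] at hy
    obtain ⟨z, hz, γ', hγ', rfl⟩ := mem_gen.mp hy
    have habs : (((z + γ' + γ : ℕ) : ℤ) - (z : ℤ)).natAbs = γ' + γ := by omega
    exact hl _ hx _ hz (by omega) (habs ▸ hadd _ hγ' _ hγ)
  · intro hx
    have hxΔ := hx.1
    rw [hgen] at hxΔ
    obtain ⟨z, hz, γ, hγ, rfl⟩ := mem_gen.mp hxΔ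
    rcases Nat.eq_zero_or_pos γ with rfl | hpos
    · simpa using hz
    · exact absurd ⟨z, by rw [hgen]; exact mem_gen.mpr ⟨z, hz, 0, h0, by omega⟩,
        γ, hγ, by omega, rfl⟩ hx.2

theorem minimal_generators_iff_lean_and_bijection (S : Set ℕ)
    (h0 : 0 ∈ S) (hadd : ∀ a ∈ S, ∀ b ∈ S, a + b ∈ S) (hfin : Sᶜ.Finite) :
    -- a normalized semimodule is minimally generated by a system of
    -- generators `E` iff `E` is `S`-lean
    (∀ Δ E : Set ℕ, 0 ∈ Δ → (∀ d ∈ Δ, ∀ γ ∈ S, d + γ ∈ Δ) →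
      GeneratesBy S E Δ →
        ((∀ E' ⊂ E, ¬ GeneratesBy S E' Δ) ↔ GLean S E)) ∧
    -- every normalized semimodule has a unique lean generating set
    (∀ Δ : Set ℕ, 0 ∈ Δ → (∀ d ∈ Δ, ∀ γ ∈ S, d + γ ∈ Δ) →
      ∃! E : Set ℕ, 0 ∈ E ∧ GLean S E ∧ GeneratesBy S E Δ) ∧
    -- every lean set containing 0 minimally generates a normalized semimodule
    (∀ E : Set ℕ, 0 ∈ E → GLean S E →
      0 ∈ (⋃ x ∈ E, shiftN S x) ∧
      (∀ d ∈ (⋃ x ∈ E, shiftN S x), ∀ γ ∈ S, d + γ ∈ (⋃ x ∈ E, shiftN S x)) ∧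
      GeneratesBy S E (⋃ x ∈ E, shiftN S x) ∧
      (∀ E' ⊂ E, ¬ GeneratesBy S E' (⋃ x ∈ E, shiftN S x))) := by
  refine ⟨?_, ?_, ?_⟩
  · intro Δ E _ _ hgen
    exact ⟨fun hmin => min_lean hadd hgen hmin, fun hl => lean_min h0 hgen hl⟩
  · intro Δ h0Δ hcl
    refine ⟨minGen S Δ, ⟨⟨h0Δ, ?_⟩, minGen_lean, minGen_generates h0 hadd hcl⟩, ?_⟩
    · rintro ⟨y, hy, γ, hγ, hγ0, h⟩; omega
    · rintro E ⟨hE0, hElean, hEgen⟩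
      exact lean_gen_unique h0 hadd hElean hEgen
  · intro E hE0 hl
    have hgen : GeneratesBy S E (⋃ x ∈ E, shiftN S x) := rfl
    refine ⟨mem_gen.mpr ⟨0, hE0, 0, h0, by omega⟩, ?_, hgen, lean_min h0 hgen hl⟩
    intro d hd γ hγ
    obtain ⟨x, hx, γ', hγ', rfl⟩ := mem_gen.mp hd
    exact mem_gen.mpr ⟨x, hx, γ' + γ, hadd _ hγ' _ hγ, by omega⟩
end

section
/- Let Γ = ⟨α,β⟩ with gcd(α,β)=1, 1 < α < β, and let p, q ∈ ℤ with |p - q| ∉ Γ. Set u := min((Γ+p) ∩ (Γ+q)) and v := p + q + αβ - u. Then (Γ+p) ∩ (Γ+q) = (Γ+u) ∪ (Γ+v). -/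
/-- The set `Γ + p ⊆ ℤ`, where `Γ = ⟨α,β⟩`. -/
def SGZ (α β : ℕ) (p : ℤ) : Set ℤ := {n | ∃ x y : ℕ, n = x * α + y * β + p}

lemma canon_exists {α β : ℕ} (hcop : Nat.Coprime α β) (h1 : 0 < α) (m : ℤ) :
    ∃ s t : ℤ, m = s * α + t * β ∧ 0 ≤ t ∧ t < α := by
  have hαβ : IsCoprime (α : ℤ) (β : ℤ) :=
    Int.isCoprime_iff_gcd_eq_one.mpr (by simpa using hcop)
  obtain ⟨a, b, hab⟩ := hαβ
  have hα0 : (α : ℤ) ≠ 0 := by exact_mod_cast h1.ne'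
  refine ⟨m * a + β * ((m * b) / α), (m * b) % α, ?_,
    Int.emod_nonneg _ hα0, Int.emod_lt_of_pos _ (by exact_mod_cast h1)⟩
  have h := Int.mul_ediv_add_emod (m * b) α
  linear_combination (-m) * hab + (-(β:ℤ)) * h

lemma canon_mem {α β : ℕ} (hcop : Nat.Coprime α β) (h1 : 0 < α) {m s t : ℤ}
    (hm : m = s * α + t * β) (ht0 : 0 ≤ t) (ht1 : t < α) :
    (∃ x y : ℕ, m = x * α + y * β) ↔ 0 ≤ s := by
  constructor
  · rintro ⟨x, y, hxy⟩
    have hαβ : IsCoprime (α : ℤ) (β : ℤ) :=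
      Int.isCoprime_iff_gcd_eq_one.mpr (by simpa using hcop)
    have hdvd : (α : ℤ) ∣ ((y : ℤ) - t) := by
      refine hαβ.dvd_of_dvd_mul_right ?_
      exact ⟨s - x, by linarith [hm, hxy]⟩
    obtain ⟨k, hk⟩ := hdvd
    have hα0 : (α : ℤ) ≠ 0 := by exact_mod_cast h1.ne'
    have hsx : s - x = k * β := by
      have h2 : (s - (x:ℤ)) * α = (k * β) * α := by nlinarith [hm, hxy, hk]
      exact mul_right_cancel₀ hα0 h2
    have hy : (0:ℤ) ≤ y := by positivity
    have hk0 : 0 ≤ k := by nlinarith [hk, ht1, hy]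
    have hx : (0:ℤ) ≤ x := by positivity
    have hβ : (0:ℤ) ≤ β := by positivity
    nlinarith [hsx]
  · intro hs
    refine ⟨s.toNat, t.toNat, ?_⟩
    rw [hm]
    push_cast [Int.toNat_of_nonneg hs, Int.toNat_of_nonneg ht0]
    ring

lemma SGZ_mem_iff {α β : ℕ} (hcop : Nat.Coprime α β) (h1 : 0 < α) {p n s t : ℤ}
    (hm : n - p = s * α + t * β) (ht0 : 0 ≤ t) (ht1 : t < α) :
    n ∈ SGZ α β p ↔ 0 ≤ s := by
  rw [← canon_mem hcop h1 hm ht0 ht1]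
  constructor
  · rintro ⟨x, y, h⟩; exact ⟨x, y, by linarith⟩
  · rintro ⟨x, y, h⟩; exact ⟨x, y, by linarith⟩

lemma SGZ_lb {α β : ℕ} {p n : ℤ} (hn : n ∈ SGZ α β p) : p ≤ n := by
  obtain ⟨x, y, h⟩ := hn
  have hx : (0:ℤ) ≤ (x:ℤ) * α := by positivity
  have hy : (0:ℤ) ≤ (y:ℤ) * β := by positivity
  linarith

lemma SGZ_self (α β : ℕ) (p : ℤ) : p ∈ SGZ α β p := ⟨0, 0, by simp⟩

lemma delorme_core {α β : ℕ} (h1 : 1 < α) (hcop : Nat.Coprime α β)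
    {p q s t : ℤ} (he : q - p = s * α + t * β)
    (ht0 : 1 ≤ t) (ht1 : t < α) (hs0 : s < 0) (hs1 : 0 < s + β) :
    SGZ α β p ∩ SGZ α β q = SGZ α β (p + t * β) ∪ SGZ α β (p + (β + s) * α) := by
  have hα : 0 < α := by omega
  ext n
  obtain ⟨X, Y, hXY, hY0, hY1⟩ := canon_exists hcop hα (n - p)
  have hmp : n ∈ SGZ α β p ↔ 0 ≤ X := SGZ_mem_iff hcop hα hXY hY0 hY1
  have hmv : n ∈ SGZ α β (p + (β + s) * α) ↔ 0 ≤ X - β - s :=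
    SGZ_mem_iff hcop hα (by linear_combination hXY) hY0 hY1
  by_cases hYt : t ≤ Y
  · have hmq : n ∈ SGZ α β q ↔ 0 ≤ X - s :=
      SGZ_mem_iff hcop hα
        (show n - q = (X - s) * α + (Y - t) * β by linear_combination hXY - he)
        (by linarith) (by linarith)
    have hmu : n ∈ SGZ α β (p + t * β) ↔ 0 ≤ X :=
      SGZ_mem_iff hcop hα
        (show n - (p + t * β) = X * α + (Y - t) * β by linear_combination hXY)
        (by linarith) (by linarith)
    simp only [Set.mem_inter_iff, Set.mem_union, hmp, hmq, hmu, hmv]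
    omega
  · push_neg at hYt
    have hmq : n ∈ SGZ α β q ↔ 0 ≤ X - s - β :=
      SGZ_mem_iff hcop hα
        (show n - q = (X - s - β) * α + (Y - t + α) * β by
          linear_combination hXY - he)
        (by linarith) (by linarith)
    have hmu : n ∈ SGZ α β (p + t * β) ↔ 0 ≤ X - β :=
      SGZ_mem_iff hcop hα
        (show n - (p + t * β) = (X - β) * α + (Y - t + α) * β by
          linear_combination hXY)
        (by linarith) (by linarith)
    simp only [Set.mem_inter_iff, Set.mem_union, hmp, hmq, hmu, hmv]
    omega

theorem delorme_lemma_one (α β : ℕ) (h1 : 1 < α) (h2 : α < β)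
    (hcop : Nat.Coprime α β) (p q u : ℤ)
    (hpq : (p - q).natAbs ∉ SG α β)
    (hu : IsLeast (SGZ α β p ∩ SGZ α β q) u) :
    SGZ α β p ∩ SGZ α β q =
      SGZ α β u ∪ SGZ α β (p + q + (α : ℤ) * β - u) := by
  have hα : 0 < α := by omega
  -- neither q - p nor p - q is in Γ (as integers)
  have hnot : ∀ m : ℤ, m.natAbs = (p - q).natAbs → ¬∃ x y : ℕ, m = x * α + y * β := by
    rintro m hm ⟨x, y, hxy⟩
    apply hpq
    refine ⟨x, y, ?_⟩
    have h' : m = ((x * α + y * β : ℕ) : ℤ) := by push_cast; linarith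
    omega
  have hqp_not : ¬∃ x y : ℕ, q - p = x * α + y * β := hnot _ (by omega)
  have hpq_not : ¬∃ x y : ℕ, p - q = x * α + y * β := hnot _ rfl
  obtain ⟨s, t, he, ht0, ht1⟩ := canon_exists hcop hα (q - p)
  have hs0 : s < 0 := by
    by_contra h
    exact hqp_not ((canon_mem hcop hα he ht0 ht1).mpr (by linarith))
  have ht1' : 1 ≤ t := by
    rcases lt_or_ge t 1 with h | h
    · exfalso
      have ht : t = 0 := by omega
      apply hpq_not
      refine ⟨(-s).toNat, 0, ?_⟩
      have : p - q = (-s) * α := by rw [ht] at he; linarith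
      push_cast [Int.toNat_of_nonneg (by linarith : (0:ℤ) ≤ -s)]
      linarith
    · exact h
  have hs1 : 0 < s + β := by
    by_contra h
    push_neg at h
    apply hpq_not
    have hpq_eq : p - q = (-s - β) * α + (α - t) * β := by push_cast; linarith [he]
    exact (canon_mem hcop hα hpq_eq (by linarith) (by linarith)).mpr (by linarith)
  have S1 : SGZ α β p ∩ SGZ α β q =
      SGZ α β (p + t * β) ∪ SGZ α β (p + (β + s) * α) :=
    delorme_core h1 hcop he ht1' ht1 hs0 hs1
  set u₁ := p + t * β with hu₁
  set v₁ := p + (β + s) * α with hv₁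
  have hsum : u₁ + v₁ = p + q + (α : ℤ) * β := by
    rw [hu₁, hv₁]; linear_combination -he
  have hleast : IsLeast (SGZ α β u₁ ∪ SGZ α β v₁) (min u₁ v₁) := by
    constructor
    · rcases min_cases u₁ v₁ with ⟨h, _⟩ | ⟨h, _⟩
      · rw [h]; exact Or.inl (SGZ_self α β u₁)
      · rw [h]; exact Or.inr (SGZ_self α β v₁)
    · rintro n (hn | hn)
      · exact le_trans (min_le_left _ _) (SGZ_lb hn)
      · exact le_trans (min_le_right _ _) (SGZ_lb hn)
  rw [S1] at hu ⊢
  have huval : u = min u₁ v₁ := hu.unique hleast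
  rcases min_cases u₁ v₁ with ⟨h, _⟩ | ⟨h, _⟩
  · rw [huval, h]
    have : p + q + (α : ℤ) * β - u₁ = v₁ := by linarith
    rw [this]
  · rw [huval, h]
    have : p + q + (α : ℤ) * β - v₁ = u₁ := by linarith
    rw [this, Set.union_comm]
end

section
/- Let Γ = ⟨α,β⟩ with gcd(α,β)=1, 1 < α < β, and let p, q ∈ ℤ with |p - q| ∉ Γ. Set u := min((Γ+p) ∩ (Γ+q)) and v := p + q + αβ - u. Then (Γ+p) ∪ (Γ+q) = (Γ + u - αβ) ∩ (Γ + v - αβ). -/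
/-- Membership of an integer in the semigroup (over ℤ). -/
def PZ (α β : ℕ) (z : ℤ) : Prop := ∃ x y : ℕ, z = x * α + y * β

lemma mem_SGZ {α β : ℕ} {p n : ℤ} : n ∈ SGZ α β p ↔ PZ α β (n - p) := by
  constructor
  · rintro ⟨x, y, h⟩; exact ⟨x, y, by rw [h]; ring⟩
  · rintro ⟨x, y, h⟩; exact ⟨x, y, by rw [← h]; ring⟩

lemma pz_add {α β : ℕ} {z w : ℤ} (hz : PZ α β z) (hw : PZ α β w) : PZ α β (z + w) := by
  obtain ⟨x, y, rfl⟩ := hz; obtain ⟨x', y', rfl⟩ := hw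
  exact ⟨x + x', y + y', by push_cast; ring⟩

lemma pz_of_eq {α β : ℕ} {z w : ℤ} (h : PZ α β z) (e : w = z) : PZ α β w := e ▸ h

lemma dl_contra {α β : ℕ} {p q : ℤ} (hpq : (p - q).natAbs ∉ SG α β)
    (h : PZ α β (q - p)) : False := by
  obtain ⟨x, y, hxy⟩ := h
  apply hpq
  refine ⟨x, y, ?_⟩
  have h2 : q - p = ((x * α + y * β : ℕ) : ℤ) := by push_cast; linarith
  generalize hN : x * α + y * β = N at h2 ⊢
  omega

lemma dl_uniq {α β : ℕ} (hcop : Nat.Coprime α β) {I₁ t₁ I₂ t₂ : ℤ}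
    (ha : 0 ≤ I₁) (ha' : I₁ < β) (hb : 0 ≤ I₂) (hb' : I₂ < β)
    (heq : (α:ℤ) * I₁ + β * t₁ = α * I₂ + β * t₂) : I₁ = I₂ ∧ t₁ = t₂ := by
  have hic : IsCoprime ((β:ℤ)) ((α:ℤ)) :=
    ((Nat.isCoprime_iff_coprime).mpr hcop).symm
  have hβ' : (0:ℤ) < β := by omega
  have hdvd : (β:ℤ) ∣ (α:ℤ) * (I₁ - I₂) := ⟨t₂ - t₁, by ring_nf; linarith⟩
  have hdvd2 : (β:ℤ) ∣ I₁ - I₂ := hic.dvd_of_dvd_mul_left hdvd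
  obtain ⟨k, hk⟩ := hdvd2
  have hk0 : k = 0 := by
    rcases lt_trichotomy k 0 with h | h | h
    · exfalso; nlinarith
    · exact h
    · exfalso; nlinarith
  rw [hk0, mul_zero] at hk
  have hI : I₁ = I₂ := by omega
  refine ⟨hI, ?_⟩
  rw [hI] at heq
  have h3 : (β:ℤ) * t₁ = β * t₂ := by linarith
  exact mul_left_cancel₀ hβ'.ne' h3

lemma dl_decomp {α β : ℕ} (hβ : 0 < β) (hcop : Nat.Coprime α β) (z : ℤ) :
    ∃ I t : ℤ, 0 ≤ I ∧ I < β ∧ z = α * I + β * t := by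
  have hic : IsCoprime ((α:ℤ)) ((β:ℤ)) := (Nat.isCoprime_iff_coprime).mpr hcop
  obtain ⟨c, d, hcd⟩ := hic
  have hβ' : (0:ℤ) < β := by exact_mod_cast hβ
  refine ⟨(z * c) % β, z * d + α * ((z * c) / β), Int.emod_nonneg _ hβ'.ne',
    Int.emod_lt_of_pos _ hβ', ?_⟩
  have hmd := Int.emod_add_mul_ediv (z * c) β
  linear_combination (-z) * hcd - (α:ℤ) * hmd
  
lemma dl_mem_iff {α β : ℕ} (hβ : 0 < β) (hcop : Nat.Coprime α β) {z I t : ℤ}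
    (hI : 0 ≤ I) (hI' : I < β) (hz : z = α * I + β * t) :
    PZ α β z ↔ 0 ≤ t := by
  constructor
  · rintro ⟨x, y, hxy⟩
    have hmd : (x:ℤ) = ((x % β : ℕ):ℤ) + (β:ℤ) * ((x / β : ℕ):ℤ) := by
      exact_mod_cast (Nat.mod_add_div x β).symm
    have heq : (α:ℤ) * ((x % β : ℕ):ℤ) + β * ((y:ℤ) + α * ((x / β : ℕ):ℤ))
        = α * I + β * t := by
      rw [← hz]; rw [hxy]; linear_combination (-(α:ℤ)) * hmd
    obtain ⟨hI2, ht2⟩ := dl_uniq hcop (Int.natCast_nonneg _)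
      (by exact_mod_cast Nat.mod_lt x hβ) hI hI' heq
    rw [← ht2]
    positivity
  · intro ht
    refine ⟨I.toNat, t.toNat, ?_⟩
    rw [hz]
    push_cast [Int.toNat_of_nonneg hI, Int.toNat_of_nonneg ht]
    ring

lemma dl_sym {α β : ℕ} (hβ : 0 < β) (hcop : Nat.Coprime α β) (z : ℤ) :
    PZ α β z ↔ ¬ PZ α β ((α:ℤ)*β - α - β - z) := by
  obtain ⟨I, t, hI, hI', hz⟩ := dl_decomp hβ hcop z
  rw [dl_mem_iff hβ hcop hI hI' hz,
      dl_mem_iff hβ hcop (I := (β:ℤ) - 1 - I) (t := -1 - t) (by omega) (by omega)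
        (by rw [hz]; ring)]
  omega

lemma dl_key {α β : ℕ} (h1 : 1 < α) (h2 : α < β) (hcop : Nat.Coprime α β)
    {p q u : ℤ} (hpq : (p - q).natAbs ∉ SG α β)
    (hu : IsLeast (SGZ α β p ∩ SGZ α β q) u) :
    PZ α β ((α:ℤ) * β - (u - p)) := by
  have hβ : 0 < β := by omega
  have hα' : (1:ℤ) < α := by exact_mod_cast h1
  have hβ' : (0:ℤ) < β := by exact_mod_cast hβ
  by_contra h
  have h' : PZ α β (u - p - α - β) := by
    have h2' := (dl_sym hβ hcop ((α:ℤ)*β - (u - p))).not.mp h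
    rw [not_not] at h2'
    exact pz_of_eq h2' (by ring)
  have hba : PZ α β ((β:ℤ)) := ⟨0, 1, by push_cast; ring⟩
  have hab : PZ α β ((α:ℤ)) := ⟨1, 0, by push_cast; ring⟩
  have hpα : PZ α β (u - p - α) := pz_of_eq (pz_add h' hba) (by ring)
  have hpβ : PZ α β (u - p - β) := pz_of_eq (pz_add h' hab) (by ring)
  have hb : PZ α β (u - q) := mem_SGZ.mp hu.1.2
  have hnα : ¬ PZ α β (u - q - α) := by
    intro hcon
    have hm : u - (α:ℤ) ∈ SGZ α β p ∩ SGZ α β q :=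
      ⟨mem_SGZ.mpr (pz_of_eq hpα (by ring)), mem_SGZ.mpr (pz_of_eq hcon (by ring))⟩
    have hle := hu.2 hm
    linarith
  have hnβ : ¬ PZ α β (u - q - β) := by
    intro hcon
    have hm : u - (β:ℤ) ∈ SGZ α β p ∩ SGZ α β q :=
      ⟨mem_SGZ.mpr (pz_of_eq hpβ (by ring)), mem_SGZ.mpr (pz_of_eq hcon (by ring))⟩
    have hle := hu.2 hm
    linarith
  obtain ⟨x, y, hxy⟩ := hb
  have hx0 : x = 0 := by
    by_contra hx
    obtain ⟨x', rfl⟩ : ∃ x', x = x' + 1 := ⟨x - 1, by omega⟩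
    exact hnα ⟨x', y, by push_cast at hxy ⊢; linarith⟩
  have hy0 : y = 0 := by
    by_contra hy
    obtain ⟨y', rfl⟩ : ∃ y', y = y' + 1 := ⟨y - 1, by omega⟩
    exact hnβ ⟨x, y', by push_cast at hxy ⊢; linarith⟩
  have huq : u = q := by rw [hx0, hy0] at hxy; push_cast at hxy; linarith
  exact dl_contra hpq (pz_of_eq (mem_SGZ.mp hu.1.1) (by rw [huq]))

lemma dl_F4 {α β : ℕ} (h1 : 1 < α) (h2 : α < β) (hcop : Nat.Coprime α β)
    {p q u : ℤ} (hpq : (p - q).natAbs ∉ SG α β)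
    (hu : IsLeast (SGZ α β p ∩ SGZ α β q) u)
    {A m : ℤ} (hA : 0 < A) (hA' : A < β) (hdec : u - p = α * A + β * m) : m ≤ 0 := by
  have hβ : 0 < β := by omega
  have hkey := dl_key h1 h2 hcop hpq hu
  have hdec2 : (α:ℤ) * β - (u - p) = α * ((β:ℤ) - A) + β * (-m) := by
    linear_combination -hdec
  have := (dl_mem_iff hβ hcop (by omega) (by omega) hdec2).mp hkey
  omega

theorem delorme_lemma_two (α β : ℕ) (h1 : 1 < α) (h2 : α < β)
    (hcop : Nat.Coprime α β) (p q u : ℤ)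
    (hpq : (p - q).natAbs ∉ SG α β)
    (hu : IsLeast (SGZ α β p ∩ SGZ α β q) u) :
    SGZ α β p ∪ SGZ α β q =
      SGZ α β (u - (α : ℤ) * β) ∩
        SGZ α β ((p + q + (α : ℤ) * β - u) - (α : ℤ) * β) := by
  have hβ : 0 < β := by omega
  have hpq' : (q - p).natAbs ∉ SG α β := by rw [← Int.natAbs_neg, neg_sub]; exact hpq
  have huswap : IsLeast (SGZ α β q ∩ SGZ α β p) u := by rwa [Set.inter_comm] at hu
  have hkeyp := dl_key h1 h2 hcop hpq hu
  have hkeyq := dl_key h1 h2 hcop hpq' huswap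
  have hup : PZ α β (u - p) := mem_SGZ.mp hu.1.1
  have huq : PZ α β (u - q) := mem_SGZ.mp hu.1.2
  ext n
  simp only [Set.mem_union, Set.mem_inter_iff, mem_SGZ]
  constructor
  · rintro (hp | hq)
    · exact ⟨pz_of_eq (pz_add hp hkeyp) (by ring), pz_of_eq (pz_add hp huq) (by ring)⟩
    · exact ⟨pz_of_eq (pz_add hq hkeyq) (by ring), pz_of_eq (pz_add hq hup) (by ring)⟩
  · rintro ⟨hc, hd⟩
    by_contra hn
    push_neg at hn
    obtain ⟨hnp, hnq⟩ := hn
    obtain ⟨I, x, hI0, hIb, hIdec⟩ := dl_decomp hβ hcop (n - p)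
    obtain ⟨J, y, hJ0, hJb, hJdec⟩ := dl_decomp hβ hcop (n - q)
    obtain ⟨A, ma, hA0, hAb, hAdec⟩ := dl_decomp hβ hcop (u - p)
    obtain ⟨B, mb, hB0, hBb, hBdec⟩ := dl_decomp hβ hcop (u - q)
    have hx : x < 0 := by
      by_contra h; push_neg at h
      exact hnp ((dl_mem_iff hβ hcop hI0 hIb hIdec).mpr h)
    have hy : y < 0 := by
      by_contra h; push_neg at h
      exact hnq ((dl_mem_iff hβ hcop hJ0 hJb hJdec).mpr h)
    have hma : 0 ≤ ma := (dl_mem_iff hβ hcop hA0 hAb hAdec).mp hup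
    have hmb : 0 ≤ mb := (dl_mem_iff hβ hcop hB0 hBb hBdec).mp huq
    have hFa : 0 < A → ma = 0 := fun h =>
      le_antisymm (dl_F4 h1 h2 hcop hpq hu h hAb hAdec) hma
    have hFb : 0 < B → mb = 0 := fun h =>
      le_antisymm (dl_F4 h1 h2 hcop hpq' huswap h hBb hBdec) hmb
    have hAB : A ≠ B := by
      intro h
      have hqp : q - p = β * (ma - mb) := by rw [h] at hAdec; linarith
      rcases le_or_gt mb ma with h' | h'
      · refine dl_contra hpq ⟨0, (ma - mb).toNat, ?_⟩
        push_cast [Int.toNat_of_nonneg (by omega : (0:ℤ) ≤ ma - mb)]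
        linarith
      · refine dl_contra hpq' ⟨0, (mb - ma).toNat, ?_⟩
        push_cast [Int.toNat_of_nonneg (by omega : (0:ℤ) ≤ mb - ma)]
        linarith
    have hIA : A ≤ I := by
      by_contra h; push_neg at h
      have hdec2 : n - (u - (α:ℤ) * β) = α * (I - A + β) + β * (x - ma) := by
        linear_combination hIdec - hAdec
      have := (dl_mem_iff hβ hcop (by omega) (by omega) hdec2).mp hc
      omega
    have hJB : B ≤ J := by
      by_contra h; push_neg at h
      have hdec2 : n - (u - (α:ℤ) * β) = α * (J - B + β) + β * (y - mb) := by
        linear_combination hJdec - hBdec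
      have := (dl_mem_iff hβ hcop (by omega) (by omega) hdec2).mp hc
      omega
    have hIJ : I - A = J - B := by
      have heq : (α:ℤ) * (I - A) + β * (x - ma) = α * (J - B) + β * (y - mb) := by
        linear_combination hAdec - hIdec + hJdec - hBdec
      exact (dl_uniq hcop (by omega) (by omega) (by omega) (by omega) heq).1
    rcases lt_or_ge (I + B) ((β:ℤ)) with hcase | hcase
    · have hd1 : n - (p + q + (α:ℤ) * β - u - (α:ℤ) * β) = α * (I + B) + β * (x + mb) := by
        linear_combination hIdec + hBdec
      have h1' := (dl_mem_iff hβ hcop (by omega) hcase hd1).mp hd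
      have hd2 : n - (p + q + (α:ℤ) * β - u - (α:ℤ) * β) = α * (J + A) + β * (y + ma) := by
        linear_combination hJdec + hAdec
      have h2' := (dl_mem_iff hβ hcop (by omega) (by omega) hd2).mp hd
      have hB0' : B = 0 := by
        by_contra hB
        have := hFb (by omega)
        omega
      have hA0' : A = 0 := by
        by_contra hA
        have := hFa (by omega)
        omega
      exact hAB (by omega)
    · have hA1 : 0 < A := by omega
      have hB1 : 0 < B := by omega
      have hma0 := hFa hA1
      have hmb0 := hFb hB1
      have hqp : q - p = (α:ℤ) * (A - B) := by
        rw [hma0] at hAdec; rw [hmb0] at hBdec; linarith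
      rcases le_or_gt B A with h' | h'
      · refine dl_contra hpq ⟨(A - B).toNat, 0, ?_⟩
        push_cast [Int.toNat_of_nonneg (by omega : (0:ℤ) ≤ A - B)]
        linarith
      · refine dl_contra hpq' ⟨(B - A).toNat, 0, ?_⟩
        push_cast [Int.toNat_of_nonneg (by omega : (0:ℤ) ≤ B - A)]
        linarith
end

section
/- Let Γ = ⟨α,β⟩ with gcd(α,β)=1, 1 < α < β, and let p, q ∈ ℤ with |p - q| ∉ Γ. Set u := min((Γ+p) ∩ (Γ+q)), v := p + q + αβ - u, and v̄ := v + c(Γ) - αβ where c(Γ) = (α-1)(β-1). Then every integer n ≥ v̄ belongs to (Γ+p) ∪ (Γ+q). -/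
lemma sym_lemma (α β : ℕ) (h1 : 1 < α) (h2 : α < β) (hcop : Nat.Coprime α β)
    (m : ℤ) (hm : ∀ x y : ℕ, m ≠ x * α + y * β) :
    ∃ x y : ℕ, (α : ℤ) * β - α - β - m = x * α + y * β := by
  have hβ : (0 : ℤ) < β := by omega
  -- Bezout representation of m
  have hco : IsCoprime (α : ℤ) (β : ℤ) := by
    rw [Int.isCoprime_iff_gcd_eq_one]; exact_mod_cast hcop
  obtain ⟨a, b, hab⟩ := hco
  -- canonical representation m = x0*α + y0*β with 0 ≤ x0 < β
  set x0 : ℤ := (m * a) % β with hx0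
  set y0 : ℤ := (m * a) / β * α + m * b with hy0
  have hx0nn : 0 ≤ x0 := Int.emod_nonneg _ (by omega)
  have hx0lt : x0 < β := Int.emod_lt_of_pos _ hβ
  have hrep : m = x0 * α + y0 * β := by
    have hdiv : (m * a) = β * ((m * a) / β) + (m * a) % β := (Int.mul_ediv_add_emod _ _).symm
    have : m * (a * α + b * β) = m * 1 := by rw [hab]
    nlinarith [this, hdiv]
  -- y0 must be negative, else m ∈ Γ
  have hy0neg : y0 < 0 := by
    by_contra hy
    push_neg at hy
    apply hm x0.toNat y0.toNat
    rw [hrep]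
    push_cast [Int.toNat_of_nonneg hx0nn, Int.toNat_of_nonneg hy]
    ring
  refine ⟨(β - 1 - x0).toNat, (-1 - y0).toNat, ?_⟩
  push_cast [Int.toNat_of_nonneg (by omega : (0:ℤ) ≤ β - 1 - x0),
    Int.toNat_of_nonneg (by omega : (0:ℤ) ≤ -1 - y0)]
  linarith [hrep]

theorem delorme_lemma_three (α β : ℕ) (h1 : 1 < α) (h2 : α < β)
    (hcop : Nat.Coprime α β) (p q u : ℤ)
    (hpq : (p - q).natAbs ∉ SG α β)
    (hu : IsLeast (SGZ α β p ∩ SGZ α β q) u) :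
    ∀ n : ℤ,
      (p + q + (α : ℤ) * β - u) + ((α : ℤ) - 1) * ((β : ℤ) - 1) - (α : ℤ) * β ≤ n →
        n ∈ SGZ α β p ∪ SGZ α β q := by
  intro n hn
  by_contra hmem
  have hnp : n ∉ SGZ α β p := fun h => hmem (Or.inl h)
  have hnq : n ∉ SGZ α β q := fun h => hmem (Or.inr h)
  have hp' : ∀ x y : ℕ, n - p ≠ x * α + y * β := by
    intro x y hxy
    exact hnp ⟨x, y, by linarith⟩
  have hq' : ∀ x y : ℕ, n - q ≠ x * α + y * β := by
    intro x y hxy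
    exact hnq ⟨x, y, by linarith⟩
  obtain ⟨x1, y1, hx1⟩ := sym_lemma α β h1 h2 hcop (n - p) hp'
  obtain ⟨x2, y2, hx2⟩ := sym_lemma α β h1 h2 hcop (n - q) hq'
  -- the element m := αβ - α - β + p + q - n lies in both translates
  have hmp : ((α : ℤ) * β - α - β + p + q - n) ∈ SGZ α β p :=
    ⟨x2, y2, by linarith⟩
  have hmq : ((α : ℤ) * β - α - β + p + q - n) ∈ SGZ α β q :=
    ⟨x1, y1, by linarith⟩
  have hle := hu.2 ⟨hmp, hmq⟩
  nlinarith [hn, hle]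
end

section
/- Let Γ = ⟨α,β⟩ with gcd(α,β)=1, 1 < α < β, and let p, q ∈ ℤ with |p - q| ∉ Γ. Set u := min((Γ+p) ∩ (Γ+q)), ū := u + c(Γ) - αβ, and v := p + q + αβ - u, where c(Γ) = (α-1)(β-1). Then {n ∈ ℤ : n ≥ ū} ∩ ((Γ+p) ∪ (Γ+q)) = {n ∈ ℤ : n ≥ ū} ∩ (Γ + v - αβ). -/
namespace DelormeAux

/-- `Γ` viewed inside `ℤ`. -/
def GZ (α β : ℕ) : Set ℤ := {n | ∃ x y : ℕ, n = x * α + y * β}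

lemma mem_SGZ_iff {α β : ℕ} {p n : ℤ} : n ∈ SGZ α β p ↔ n - p ∈ GZ α β := by
  constructor
  · rintro ⟨x, y, rfl⟩; exact ⟨x, y, by ring⟩
  · rintro ⟨x, y, h⟩; exact ⟨x, y, by linarith⟩

lemma GZ_add {α β : ℕ} {m n : ℤ} (hm : m ∈ GZ α β) (hn : n ∈ GZ α β) :
    m + n ∈ GZ α β := by
  obtain ⟨x, y, rfl⟩ := hm; obtain ⟨x', y', rfl⟩ := hn
  exact ⟨x + x', y + y', by push_cast; ring⟩

lemma natAbs_mem_SG {α β : ℕ} {d : ℤ} (hd : d ∈ GZ α β) : d.natAbs ∈ SG α β := by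
  obtain ⟨x, y, rfl⟩ := hd
  refine ⟨x, y, ?_⟩
  have h : ((x : ℤ) * α + (y : ℤ) * β) = ((x * α + y * β : ℕ) : ℤ) := by push_cast; ring
  rw [h, Int.natAbs_natCast]

/-- Existence of the canonical representation `n = k·β + j·α` with `0 ≤ k < α`. -/
lemma rep_exists {α β : ℕ} (hα : 0 < α) (hcop : Nat.Coprime α β) (n : ℤ) :
    ∃ k j : ℤ, 0 ≤ k ∧ k < α ∧ n = k * β + j * α := by
  obtain ⟨a, b, hab⟩ := Nat.isCoprime_iff_coprime.mpr hcop
  have hA : (0:ℤ) < (α:ℤ) := by exact_mod_cast hα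
  set k : ℤ := (n * b) % (α : ℤ) with hk
  have hk0 : 0 ≤ k := Int.emod_nonneg _ (by positivity)
  have hkA : k < α := Int.emod_lt_of_pos _ hA
  have hdvd : (α : ℤ) ∣ n - k * β := by
    have hkdef : k = n * b - (α:ℤ) * (n * b / α) := by
      rw [hk, Int.emod_def]
    refine ⟨n * a + (n * b / α) * β, ?_⟩
    have : n * (a * α + b * β) = n := by rw [hab]; ring
    calc n - k * β = n * (a * α + b * β) - k * β := by rw [this]
      _ = (α:ℤ) * (n * a + (n * b / α) * β) := by rw [hkdef]; ring
  obtain ⟨j, hj⟩ := hdvd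
  exact ⟨k, j, hk0, hkA, by linarith⟩

/-- Membership criterion via the canonical representation. -/
lemma mem_iff_rep {α β : ℕ} (hα : 0 < α) (hcop : Nat.Coprime α β) {n k j : ℤ}
    (hk0 : 0 ≤ k) (hkA : k < α) (hrep : n = k * β + j * α) :
    n ∈ GZ α β ↔ 0 ≤ j := by
  have hcopZ : IsCoprime (α : ℤ) (β : ℤ) := Nat.isCoprime_iff_coprime.mpr hcop
  have hA : (0:ℤ) < (α:ℤ) := by exact_mod_cast hα
  constructor
  · rintro ⟨x, y, hxy⟩
    have heq : ((y:ℤ) - k) * β = (j - (x:ℤ)) * α := by linarith [hxy, hrep]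
    have hdvd : (α : ℤ) ∣ ((y:ℤ) - k) := by
      refine hcopZ.dvd_of_dvd_mul_right ⟨j - (x:ℤ), ?_⟩
      linarith [heq]
    obtain ⟨t, ht⟩ := hdvd
    have hy0 : (0:ℤ) ≤ y := Int.ofNat_nonneg y
    have ht0 : 0 ≤ t := by nlinarith
    have hjx : j = (x:ℤ) + t * β := by
      have h2 : ((α:ℤ) * t) * β = (j - (x:ℤ)) * α := by rw [← ht]; exact heq
      have h3 : (α:ℤ) * (t * β) = (α:ℤ) * (j - x) := by linarith [h2]
      have := mul_left_cancel₀ (ne_of_gt hA) h3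
      linarith
    have hB : (0:ℤ) ≤ (β:ℤ) := Int.ofNat_nonneg β
    have hx0 : (0:ℤ) ≤ (x:ℤ) := Int.ofNat_nonneg x
    nlinarith
  · intro hj
    refine ⟨j.toNat, k.toNat, ?_⟩
    rw [Int.toNat_of_nonneg hj, Int.toNat_of_nonneg hk0]
    linarith [hrep]

/-- Symmetry: `n ∈ Γ ↔ F - n ∉ Γ`, where `F = αβ - α - β`. -/
lemma sym {α β : ℕ} (hα : 0 < α) (hcop : Nat.Coprime α β) (n : ℤ) :
    n ∈ GZ α β ↔ ((α:ℤ) * β - α - β - n) ∉ GZ α β := by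
  obtain ⟨k, j, hk0, hkA, hrep⟩ := rep_exists hα hcop n
  have h1 := mem_iff_rep hα hcop hk0 hkA hrep
  have h2 : ((α:ℤ) * β - α - β - n) = ((α:ℤ) - 1 - k) * β + (-1 - j) * α := by
    rw [hrep]; ring
  have h3 := mem_iff_rep hα hcop (by linarith : (0:ℤ) ≤ (α:ℤ) - 1 - k)
    (by linarith : (α:ℤ) - 1 - k < α) h2
  rw [h1, h3]; omega

/-- The asymmetric core step. -/
lemma core_aux {α β : ℕ} (hα : 1 < α) (hβ : α < β) (hcop : Nat.Coprime α β)
    {a b s : ℤ} (ha : a ∈ GZ α β) (hb : b ∈ GZ α β)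
    (has : a + s ∈ GZ α β) (hbs : b + s ∈ GZ α β)
    (hab : a - b ∉ GZ α β)
    (hminα : ¬(a - α ∈ GZ α β ∧ b - α ∈ GZ α β))
    (hminβ : ¬(a - β ∈ GZ α β ∧ b - β ∈ GZ α β))
    (hsum : a + b + s ≤ (α:ℤ) * β - 1)
    {ka ja kb jb ks js : ℤ}
    (hka0 : 0 ≤ ka) (hkaA : ka < α) (hrepa : a = ka * β + ja * α)
    (hkb0 : 0 ≤ kb) (hkbA : kb < α) (hrepb : b = kb * β + jb * α)
    (hks0 : 0 ≤ ks) (hksA : ks < α) (hreps : s = ks * β + js * α)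
    (hkba : kb < ka) (hjs : js < 0) : False := by
  have hα0 : 0 < α := by omega
  have hA : (1:ℤ) < (α:ℤ) := by exact_mod_cast hα
  have hB : (α:ℤ) < (β:ℤ) := by exact_mod_cast hβ
  have hja0 : 0 ≤ ja := (mem_iff_rep hα0 hcop hka0 hkaA hrepa).mp ha
  have hjb0 : 0 ≤ jb := (mem_iff_rep hα0 hcop hkb0 hkbA hrepb).mp hb
  -- from a - b ∉ Γ : ja < jb
  have hjab : ja < jb := by
    have hrepab : a - b = (ka - kb) * β + (ja - jb) * α := by
      rw [hrepa, hrepb]; ring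
    have := mem_iff_rep hα0 hcop (by linarith : (0:ℤ) ≤ ka - kb)
      (by linarith : ka - kb < α) hrepab
    by_contra hc
    exact hab (this.mpr (by omega))
  -- minimality w.r.t. α : ja = 0
  have hja : ja = 0 := by
    by_contra hc
    have hja1 : 1 ≤ ja := by omega
    refine hminα ⟨?_, ?_⟩
    · exact (mem_iff_rep hα0 hcop hka0 hkaA
        (by rw [hrepa]; ring : a - (α:ℤ) = ka * β + (ja - 1) * α)).mpr (by omega)
    · exact (mem_iff_rep hα0 hcop hkb0 hkbA
        (by rw [hrepb]; ring : b - (α:ℤ) = kb * β + (jb - 1) * α)).mpr (by omega)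
  -- minimality w.r.t. β : kb = 0
  have hkb : kb = 0 := by
    by_contra hc
    have hkb1 : 1 ≤ kb := by omega
    refine hminβ ⟨?_, ?_⟩
    · exact (mem_iff_rep hα0 hcop (by omega : (0:ℤ) ≤ ka - 1) (by omega : ka - 1 < α)
        (by rw [hrepa]; ring : a - (β:ℤ) = (ka - 1) * β + ja * α)).mpr hja0
    · exact (mem_iff_rep hα0 hcop (by omega : (0:ℤ) ≤ kb - 1) (by omega : kb - 1 < α)
        (by rw [hrepb]; ring : b - (β:ℤ) = (kb - 1) * β + jb * α)).mpr hjb0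
  -- from a + s ∈ Γ : ka + ks ≥ α
  have hkas : (α:ℤ) ≤ ka + ks := by
    by_contra hc
    push_neg at hc
    have := (mem_iff_rep hα0 hcop (by omega : (0:ℤ) ≤ ka + ks) hc
      (by rw [hrepa, hreps, hja]; ring : a + s = (ka + ks) * β + js * α)).mp has
    omega
  -- from b + s ∈ Γ : 0 ≤ jb + js
  have hjbs : 0 ≤ jb + js := by
    exact (mem_iff_rep hα0 hcop hks0 hksA
      (by rw [hrepb, hreps, hkb]; ring : b + s = ks * β + (jb + js) * α)).mp hbs
  -- now a + b + s = (ka + ks)·β + (jb + js)·α ≥ α·β, contradiction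
  have h1 : a + b + s = (ka + ks) * β + (jb + js) * α := by
    rw [hrepa, hrepb, hreps, hja, hkb]; ring
  nlinarith [mul_nonneg (by linarith : (0:ℤ) ≤ ka + ks - α) (by linarith : (0:ℤ) ≤ (β:ℤ)),
    mul_nonneg hjbs (by linarith : (0:ℤ) ≤ (α:ℤ))]

/-- Core lemma: below the bound, the intersection is `Γ + u`. -/
lemma core {α β : ℕ} (hα : 1 < α) (hβ : α < β) (hcop : Nat.Coprime α β)
    {a b s : ℤ} (ha : a ∈ GZ α β) (hb : b ∈ GZ α β)
    (has : a + s ∈ GZ α β) (hbs : b + s ∈ GZ α β)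
    (hab : a - b ∉ GZ α β) (hba : b - a ∉ GZ α β)
    (hminα : ¬(a - α ∈ GZ α β ∧ b - α ∈ GZ α β))
    (hminβ : ¬(a - β ∈ GZ α β ∧ b - β ∈ GZ α β))
    (hsum : a + b + s ≤ (α:ℤ) * β - 1) : s ∈ GZ α β := by
  have hα0 : 0 < α := by omega
  by_contra hs
  obtain ⟨ka, ja, hka0, hkaA, hrepa⟩ := rep_exists hα0 hcop a
  obtain ⟨kb, jb, hkb0, hkbA, hrepb⟩ := rep_exists hα0 hcop b
  obtain ⟨ks, js, hks0, hksA, hreps⟩ := rep_exists hα0 hcop s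
  have hjs : js < 0 := by
    by_contra hc
    exact hs ((mem_iff_rep hα0 hcop hks0 hksA hreps).mpr (by omega))
  rcases lt_trichotomy kb ka with h | h | h
  · exact core_aux hα hβ hcop ha hb has hbs hab hminα hminβ hsum
      hka0 hkaA hrepa hkb0 hkbA hrepb hks0 hksA hreps h hjs
  · -- ka = kb : contradiction with a - b ∉ Γ and b - a ∉ Γ
    have h1 := mem_iff_rep hα0 hcop (le_refl 0) (by exact_mod_cast hα0 : (0:ℤ) < α)
      (by rw [hrepa, hrepb, h]; ring : a - b = 0 * β + (ja - jb) * α)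
    have h2 := mem_iff_rep hα0 hcop (le_refl 0) (by exact_mod_cast hα0 : (0:ℤ) < α)
      (by rw [hrepa, hrepb, h]; ring : b - a = 0 * β + (jb - ja) * α)
    have hx : ¬ (0 ≤ ja - jb) := fun hc => hab (h1.mpr hc)
    have hy : ¬ (0 ≤ jb - ja) := fun hc => hba (h2.mpr hc)
    omega
  · exact core_aux hα hβ hcop hb ha hbs has hba
      (fun ⟨x, y⟩ => hminα ⟨y, x⟩) (fun ⟨x, y⟩ => hminβ ⟨y, x⟩)
      (by linarith) hkb0 hkbA hrepb hka0 hkaA hrepa hks0 hksA hreps h hjs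

end DelormeAux

open DelormeAux in
theorem delorme_lemma_four (α β : ℕ) (h1 : 1 < α) (h2 : α < β)
    (hcop : Nat.Coprime α β) (p q u : ℤ)
    (hpq : (p - q).natAbs ∉ SG α β)
    (hu : IsLeast (SGZ α β p ∩ SGZ α β q) u) :
    {n : ℤ | u + ((α : ℤ) - 1) * ((β : ℤ) - 1) - (α : ℤ) * β ≤ n} ∩
        (SGZ α β p ∪ SGZ α β q) =
      {n : ℤ | u + ((α : ℤ) - 1) * ((β : ℤ) - 1) - (α : ℤ) * β ≤ n} ∩
        SGZ α β ((p + q + (α : ℤ) * β - u) - (α : ℤ) * β) := by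
  have hα0 : 0 < α := by omega
  have hA : (1:ℤ) < (α:ℤ) := by exact_mod_cast h1
  have hB : (α:ℤ) < (β:ℤ) := by exact_mod_cast h2
  have hup : u - p ∈ GZ α β := mem_SGZ_iff.mp hu.1.1
  have huq : u - q ∈ GZ α β := mem_SGZ_iff.mp hu.1.2
  have hqp' : q - p ∉ GZ α β := by
    intro hc
    have h := natAbs_mem_SG hc
    rw [show q - p = -(p - q) by ring, Int.natAbs_neg] at h
    exact hpq h
  have hpq' : p - q ∉ GZ α β := fun hc => hpq (natAbs_mem_SG hc)
  have hminα : ¬((u - p) - (α:ℤ) ∈ GZ α β ∧ (u - q) - (α:ℤ) ∈ GZ α β) := by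
    rintro ⟨x, y⟩
    have : u - (α:ℤ) ∈ SGZ α β p ∩ SGZ α β q :=
      ⟨mem_SGZ_iff.mpr (by rwa [show u - (α:ℤ) - p = (u - p) - (α:ℤ) by ring]),
       mem_SGZ_iff.mpr (by rwa [show u - (α:ℤ) - q = (u - q) - (α:ℤ) by ring])⟩
    have := hu.2 this
    linarith
  have hminβ : ¬((u - p) - (β:ℤ) ∈ GZ α β ∧ (u - q) - (β:ℤ) ∈ GZ α β) := by
    rintro ⟨x, y⟩
    have : u - (β:ℤ) ∈ SGZ α β p ∩ SGZ α β q :=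
      ⟨mem_SGZ_iff.mpr (by rwa [show u - (β:ℤ) - p = (u - p) - (β:ℤ) by ring]),
       mem_SGZ_iff.mpr (by rwa [show u - (β:ℤ) - q = (u - q) - (β:ℤ) by ring])⟩
    have := hu.2 this
    linarith
  ext n
  simp only [Set.mem_inter_iff, Set.mem_union, Set.mem_setOf_eq]
  refine and_congr_right fun hn => ?_
  -- set m := p + q + (αβ - α - β) - n
  set F : ℤ := (α:ℤ) * β - α - β with hF
  set m : ℤ := p + q + F - n with hm
  have key : ((n ∈ SGZ α β p) ∨ (n ∈ SGZ α β q)) ↔ (m - u ∉ GZ α β) := by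
    have e1 : n ∈ SGZ α β p ↔ (m - q) ∉ GZ α β := by
      rw [mem_SGZ_iff, sym hα0 hcop (n - p)]
      rw [show (α:ℤ) * β - α - β - (n - p) = m - q by rw [hm, hF]; ring]
    have e2 : n ∈ SGZ α β q ↔ (m - p) ∉ GZ α β := by
      rw [mem_SGZ_iff, sym hα0 hcop (n - q)]
      rw [show (α:ℤ) * β - α - β - (n - q) = m - p by rw [hm, hF]; ring]
    rw [e1, e2]
    have main : ((m - q) ∈ GZ α β ∧ (m - p) ∈ GZ α β) ↔ (m - u) ∈ GZ α β := by
      constructor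
      · rintro ⟨hmq, hmp⟩
        refine core h1 h2 hcop hup huq ?_ ?_ ?_ ?_ hminα hminβ ?_
        · rwa [show (u - p) + (m - u) = m - p by ring]
        · rwa [show (u - q) + (m - u) = m - q by ring]
        · rwa [show (u - p) - (u - q) = q - p by ring]
        · rwa [show (u - q) - (u - p) = p - q by ring]
        · have hc : ((α:ℤ) - 1) * ((β:ℤ) - 1) = F + 1 := by rw [hF]; ring
          have hm' : m = p + q + F - n := hm
          linarith [hn, hc, hm']
      · intro hmu
        constructor
        · have := GZ_add hmu huq
          rwa [show (m - u) + (u - q) = m - q by ring] at this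
        · have := GZ_add hmu hup
          rwa [show (m - u) + (u - p) = m - p by ring] at this
    constructor
    · rintro (h | h) hmu
      · exact h (main.mpr hmu).1
      · exact h (main.mpr hmu).2
    · intro h
      by_contra hc
      push_neg at hc
      exact h (main.mp ⟨hc.1, hc.2⟩)
  have e3 : n ∈ SGZ α β ((p + q + (α:ℤ) * β - u) - (α:ℤ) * β) ↔ (m - u) ∉ GZ α β := by
    rw [mem_SGZ_iff, sym hα0 hcop (n - ((p + q + (α:ℤ) * β - u) - (α:ℤ) * β))]
    rw [show (α:ℤ) * β - α - β - (n - ((p + q + (α:ℤ) * β - u) - (α:ℤ) * β)) = m - u by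
      rw [hm, hF]; ring]
  rw [key, e3]
end

section
/- Let Γ = ⟨α,β⟩ with gcd(α,β)=1, 1 < α < β. Let Δ be a normalized Γ-semimodule with minimal generators g₀ = 0 ≺ g₁ ≺ ⋯ ≺ g_s, where gᵢ = αβ - aᵢα - bᵢβ (a₀ = b₀ = 0) and gᵢ ≺ gⱼ means aᵢ < aⱼ and bᵢ > bⱼ. For i ≥ 1 let Eᵢ₋₁ = ⋃_{0≤j≤i-1}(Γ+gⱼ) and uᵢ = min((Γ+gᵢ) ∩ Eᵢ₋₁). Then uᵢ = min(αβ - aᵢ₋₁α - bᵢβ, min(α(β - aᵢ), β(α - bᵢ))). -/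
lemma ui_key (α β : ℕ) (h1 : 1 < α) (h2 : α < β) (hcop : Nat.Coprime α β)
    (x' y' : ℕ) (c1 c2 : ℤ) (hc1 : c1 < 0) (hc1' : -(β : ℤ) < c1) (hc2 : c2 < α)
    (heq : (x' : ℤ) * α + (y' : ℤ) * β = c1 * α + c2 * β) : False := by
  have hβ : (0:ℤ) < β := by exact_mod_cast (by omega : 0 < β)
  have hα : (0:ℤ) < α := by exact_mod_cast (by omega : 0 < α)
  have hco : IsCoprime (β : ℤ) (α : ℤ) :=
    (Nat.isCoprime_iff_coprime.mpr hcop.symm)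
  have hdvd : (β : ℤ) ∣ ((x' : ℤ) - c1) := by
    refine hco.dvd_of_dvd_mul_right ⟨c2 - (y' : ℤ), ?_⟩
    linarith
  have hpos : (0:ℤ) < (x' : ℤ) - c1 := by
    have : (0:ℤ) ≤ (x' : ℤ) := Int.natCast_nonneg x'
    linarith
  have hge : (β : ℤ) ≤ (x' : ℤ) - c1 := Int.le_of_dvd hpos hdvd
  have h3 : (β : ℤ) * α ≤ ((x' : ℤ) - c1) * α := by
    exact mul_le_mul_of_nonneg_right hge hα.le
  have h4 : ((x' : ℤ) - c1) * α = (c2 - (y' : ℤ)) * β := by linarith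
  have h5 : (α : ℤ) * β ≤ (c2 - (y' : ℤ)) * β := by linarith [mul_comm (β:ℤ) (α:ℤ)]
  have h6 : (α : ℤ) ≤ c2 - (y' : ℤ) := le_of_mul_le_mul_right h5 hβ
  have : (0:ℤ) ≤ (y' : ℤ) := Int.natCast_nonneg y'
  linarith

theorem ui_formula (α β s : ℕ) (h1 : 1 < α) (h2 : α < β)
    (hcop : Nat.Coprime α β) (g a b : ℕ → ℕ)
    (ha0 : a 0 = 0) (hb0 : b 0 = 0) (hg0 : g 0 = 0)
    (hcoord : ∀ i, 1 ≤ i → i ≤ s →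
      0 < a i ∧ a i < β ∧ 0 < b i ∧ b i < α ∧
        (g i : ℤ) = (α : ℤ) * β - a i * α - b i * β)
    (horder : ∀ i j, 1 ≤ i → i < j → j ≤ s → a i < a j ∧ b j < b i)
    (Δ : Set ℕ)
    (hgen : GeneratesBy (SG α β) (g '' Set.Iic s) Δ)
    (hminimal : ∀ E' ⊂ g '' Set.Iic s, ¬ GeneratesBy (SG α β) E' Δ) :
    ∀ i, 1 ≤ i → i ≤ s → ∀ u : ℕ,
      IsLeast (shiftN (SG α β) (g i) ∩
        {n | ∃ j < i, n ∈ shiftN (SG α β) (g j)}) u →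
      (u : ℤ) = min ((α : ℤ) * β - a (i - 1) * α - b i * β)
        (min ((α : ℤ) * ((β : ℤ) - a i)) ((β : ℤ) * ((α : ℤ) - b i))) := by
  intro i hi1 his u hu
  obtain ⟨hai, haiβ, hbi, hbiα, hgi⟩ := hcoord i hi1 his
  -- a (i-1) < a i
  have hai1 : a (i - 1) < a i := by
    rcases eq_or_lt_of_le hi1 with h | h
    · have hi' : i = 1 := h.symm
      subst hi'
      simpa [ha0] using hai
    · exact (horder (i-1) i (by omega) (by omega) his).1
  -- every a j with j < i is ≤ a (i-1)
  have hajle : ∀ j, j < i → a j ≤ a (i - 1) := by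
    intro j hj
    rcases Nat.eq_zero_or_pos j with hj0 | hjpos
    · rw [hj0, ha0]; exact Nat.zero_le _
    by_cases hje : j = i - 1
    · rw [hje]
    · exact (horder j (i-1) hjpos (by omega) (by omega)).1.le
  -- the candidate minimum as a natural number
  set n1 : ℕ := g i + (a i - a (i - 1)) * α with hn1
  set n2 : ℕ := α * (β - a i) with hn2
  set n3 : ℕ := β * (α - b i) with hn3
  set m : ℕ := min n1 (min n2 n3) with hm
  -- cast identities
  have e1 : (n1 : ℤ) = (α : ℤ) * β - a (i - 1) * α - b i * β := by
    rw [hn1, Nat.cast_add, Nat.cast_mul, Nat.cast_sub hai1.le]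
    linear_combination hgi
  have e2 : (n2 : ℤ) = (α : ℤ) * ((β : ℤ) - a i) := by
    rw [hn2, Nat.cast_mul, Nat.cast_sub haiβ.le]
  have e3 : (n3 : ℤ) = (β : ℤ) * ((α : ℤ) - b i) := by
    rw [hn3, Nat.cast_mul, Nat.cast_sub hbiα.le]
  have hcast : (m : ℤ) = min ((α : ℤ) * β - a (i - 1) * α - b i * β)
      (min ((α : ℤ) * ((β : ℤ) - a i)) ((β : ℤ) * ((α : ℤ) - b i))) := by
    rw [hm, Nat.cast_min, Nat.cast_min, e1, e2, e3]
  -- memberships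
  have hmem1 : n1 ∈ shiftN (SG α β) (g i) ∩
      {n | ∃ j < i, n ∈ shiftN (SG α β) (g j)} := by
    constructor
    · exact ⟨(a i - a (i-1)) * α, ⟨a i - a (i-1), 0, by ring⟩, rfl⟩
    · refine ⟨i - 1, by omega, ?_⟩
      rcases eq_or_lt_of_le hi1 with h | h
      · -- i = 1
        refine ⟨n1, ⟨0, α - b i, ?_⟩, by rw [← h]; simp [hg0]⟩
        have h' : (n1 : ℤ) = ((α - b i : ℕ) : ℤ) * β := by
          rw [Nat.cast_sub hbiα.le, e1, ← h, ha0]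
          push_cast; ring
        simpa using (by exact_mod_cast h' : n1 = (α - b i) * β)
      · -- i ≥ 2
        obtain ⟨_, _, _, hbi1α, hgi1⟩ := hcoord (i-1) (by omega) (by omega)
        have hbb : b i < b (i - 1) := (horder (i-1) i (by omega) (by omega) his).2
        refine ⟨(b (i-1) - b i) * β, ⟨0, b (i-1) - b i, by ring⟩, ?_⟩
        have : (n1 : ℤ) = (g (i-1) : ℤ) + ((b (i-1) - b i : ℕ) : ℤ) * β := by
          rw [Nat.cast_sub hbb.le, e1, hgi1]; ring
        exact_mod_cast this
  have hmem2 : n2 ∈ shiftN (SG α β) (g i) ∩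
      {n | ∃ j < i, n ∈ shiftN (SG α β) (g j)} := by
    constructor
    · refine ⟨b i * β, ⟨0, b i, by ring⟩, ?_⟩
      have : (n2 : ℤ) = (g i : ℤ) + (b i : ℤ) * β := by
        rw [e2, hgi]; ring
      exact_mod_cast this
    · exact ⟨0, by omega, n2, ⟨β - a i, 0, by rw [hn2]; ring⟩, by rw [hg0]; simp⟩
  have hmem3 : n3 ∈ shiftN (SG α β) (g i) ∩
      {n | ∃ j < i, n ∈ shiftN (SG α β) (g j)} := by
    constructor
    · refine ⟨a i * α, ⟨a i, 0, by ring⟩, ?_⟩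
      have : (n3 : ℤ) = (g i : ℤ) + (a i : ℤ) * α := by
        rw [e3, hgi]; ring
      exact_mod_cast this
    · exact ⟨0, by omega, n3, ⟨0, α - b i, by rw [hn3]; ring⟩, by rw [hg0]; simp⟩
  have hmmem : m ∈ shiftN (SG α β) (g i) ∩
      {n | ∃ j < i, n ∈ shiftN (SG α β) (g j)} := by
    have : m = n1 ∨ m = n2 ∨ m = n3 := by omega
    rcases this with h | h | h <;> rw [h]
    · exact hmem1
    · exact hmem2
    · exact hmem3
  -- lower bound
  have hlb : ∀ n ∈ shiftN (SG α β) (g i) ∩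
      {n | ∃ j < i, n ∈ shiftN (SG α β) (g j)}, m ≤ n := by
    rintro n ⟨⟨γ, ⟨x, y, hxy⟩, hnγ⟩, j, hj, γ', ⟨x', y', hxy'⟩, hnγ'⟩
    have hβ : (0:ℤ) < β := by exact_mod_cast (by omega : 0 < β)
    have hα : (0:ℤ) < α := by exact_mod_cast (by omega : 0 < α)
    have hnI : (n : ℤ) = (g i : ℤ) + (x : ℤ) * α + (y : ℤ) * β := by
      rw [hnγ, hxy]; push_cast; ring
    have hnJ : (n : ℤ) = (g j : ℤ) + (x' : ℤ) * α + (y' : ℤ) * β := by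
      rw [hnγ', hxy']; push_cast; ring
    have hxnn : (0:ℤ) ≤ (x : ℤ) := Int.natCast_nonneg x
    have hynn : (0:ℤ) ≤ (y : ℤ) := Int.natCast_nonneg y
    suffices hZ : (m : ℤ) ≤ (n : ℤ) by exact_mod_cast hZ
    rw [hcast]
    by_cases hy : (b i : ℤ) ≤ y
    · refine le_trans (le_trans (min_le_right _ _) (min_le_left _ _)) ?_
      have h5 : (b i : ℤ) * β ≤ (y : ℤ) * β := mul_le_mul_of_nonneg_right hy hβ.le
      have h6 : (0:ℤ) ≤ (x : ℤ) * α := mul_nonneg hxnn hα.le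
      have h7 : (α:ℤ) * ((β : ℤ) - a i) = α * β - a i * α := by ring
      linarith [hgi, hnI]
    by_cases hx : (a i : ℤ) - a (i - 1) ≤ x
    · refine le_trans (min_le_left _ _) ?_
      have h5 : ((a i : ℤ) - a (i-1)) * α ≤ (x : ℤ) * α :=
        mul_le_mul_of_nonneg_right hx hα.le
      have h6 : (0:ℤ) ≤ (y : ℤ) * β := mul_nonneg hynn hβ.le
      have h7 : ((a i : ℤ) - a (i-1)) * α = a i * α - a (i-1) * α := by ring
      linarith [hgi, hnI]
    · exfalso
      push_neg at hx hy
      set A' : ℤ := (a i : ℤ) - x with hA'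
      set B' : ℤ := (b i : ℤ) - y with hB'
      have hA'1 : (a (i-1) : ℤ) < A' := by rw [hA']; linarith
      have hA'2 : A' < β := by
        have : (a i : ℤ) < β := by exact_mod_cast haiβ
        rw [hA']; linarith
      have hB'1 : 0 < B' := by rw [hB']; linarith
      have hnz : (n : ℤ) = (α : ℤ) * β - A' * α - B' * β := by
        rw [hA', hB']; linear_combination hnI + hgi
      rcases Nat.eq_zero_or_pos j with hj0 | hjpos
      · refine ui_key α β h1 h2 hcop x' y' (-A') ((α : ℤ) - B') ?_ (by linarith) (by linarith) ?_
        · have : (0:ℤ) ≤ (a (i-1) : ℤ) := Int.natCast_nonneg _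
          linarith
        · rw [hj0, hg0] at hnJ
          push_cast at hnJ
          linarith [hnz, hnJ]
      · obtain ⟨haj, hajβ, hbj, hbjα, hgj⟩ := hcoord j hjpos (by omega)
        have hajle' : (a j : ℤ) ≤ a (i-1) := by exact_mod_cast hajle j hj
        have hbjα' : (b j : ℤ) < α := by exact_mod_cast hbjα
        refine ui_key α β h1 h2 hcop x' y' ((a j : ℤ) - A') ((b j : ℤ) - B')
          (by linarith) ?_ (by linarith) ?_
        · have : (0:ℤ) ≤ (a j : ℤ) := Int.natCast_nonneg _
          linarith
        · linarith [hnz, hnJ, hgj]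
  have huniq : u = m := hu.unique ⟨hmmem, hlb⟩
  rw [huniq]
  exact hcast
end

section
/- Let Γ = ⟨α,β⟩ with gcd(α,β)=1, 1 < α < β, and let Δ be an increasing Γ-semimodule with minimal generators g₀ = 0 < g₁ < ⋯ < g_s and g_{s+1} = ∞. For each i = 0, …, s-1 there exists cᵢ ∈ (-Γ) = {-γ : γ ∈ Γ} (given recursively by c₀ = 0 and cᵢ = cᵢ₋₁ + gᵢ - uᵢ) such that, setting ūᵢ = uᵢ + c(Γ) - αβ, one has {n ∈ ℤ : n ≥ ūᵢ} ∩ Eᵢ = {n ∈ ℤ : n ≥ ūᵢ} ∩ (Γ + cᵢ). -/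
/-- `u₀ = 0` and, for `i ≥ 1`,
`uᵢ = min((Γ + gᵢ) ∩ Eᵢ₋₁)` where `Eᵢ₋₁ = ⋃_{j<i}(Γ + gⱼ)`. -/
noncomputable def uval (S : Set ℕ) (g : ℕ → ℕ) : ℕ → ℕ
  | 0 => 0
  | i + 1 => sInf (shiftN S (g (i + 1)) ∩ {n | ∃ j ≤ i, n ∈ shiftN S (g j)})

/-- `Δ` is an increasing `S`-semimodule: it has minimal generators
`g 0 = 0 < g 1 < ⋯ < g s` with `g (i+1) > uᵢ` for all `0 ≤ i ≤ s`
(the condition for `i = s` is vacuous since `g (s+1) = ∞`). -/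
noncomputable def IsIncreasing (S Δ : Set ℕ) : Prop :=
  ∃ s : ℕ, ∃ g : ℕ → ℕ, g 0 = 0 ∧
    (∀ i j, i < j → j ≤ s → g i < g j) ∧
    GeneratesBy S (g '' Set.Iic s) Δ ∧
    (∀ E' ⊂ g '' Set.Iic s, ¬ GeneratesBy S E' Δ) ∧
    (∀ i, i < s → uval S g i < g (i + 1))

/-! ### Auxiliary development -/

/-- Integer-valued membership in the semigroup generated by `α` and `β`. -/
def inG (α β : ℕ) (n : ℤ) : Prop := ∃ x y : ℕ, n = x * α + y * β

lemma inG_nonneg {α β : ℕ} {n : ℤ} (h : inG α β n) : 0 ≤ n := by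
  obtain ⟨x, y, rfl⟩ := h; positivity

lemma inG_add {α β : ℕ} {m n : ℤ} (hm : inG α β m) (hn : inG α β n) :
    inG α β (m + n) := by
  obtain ⟨x, y, rfl⟩ := hm; obtain ⟨x', y', rfl⟩ := hn
  exact ⟨x + x', y + y', by push_cast; ring⟩

lemma inG_ofZ {α β : ℕ} {X Y : ℤ} (hX : 0 ≤ X) (hY : 0 ≤ Y) :
    inG α β (X * α + Y * β) :=
  ⟨X.toNat, Y.toNat, by rw [Int.toNat_of_nonneg hX, Int.toNat_of_nonneg hY]⟩

lemma exists_canon {α β : ℕ} (hβ : 0 < β) (hcop : Nat.Coprime α β) (n : ℤ) :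
    ∃ x y : ℤ, 0 ≤ x ∧ x < β ∧ n = x * α + y * β := by
  have hc : IsCoprime (α : ℤ) (β : ℤ) := by
    rw [Int.isCoprime_iff_gcd_eq_one]; exact_mod_cast hcop
  obtain ⟨p, q, hpq⟩ := hc
  have hβ' : (0:ℤ) < β := by exact_mod_cast hβ
  refine ⟨(n * p) % β, ((n * p) / β) * α + n * q, Int.emod_nonneg _ (by positivity),
    Int.emod_lt_of_pos _ hβ', ?_⟩
  have h := Int.emod_add_mul_ediv (n * p) β
  have : n = (n * p) * α + (n * q) * β := by
    have : n * (p * α + q * β) = n * 1 := by rw [hpq]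
    nlinarith [this]
  nlinarith [h]

lemma memG_iff {α β : ℕ} (hβ : 0 < β) (hcop : Nat.Coprime α β) {x y : ℤ}
    (hx0 : 0 ≤ x) (hx1 : x < β) : inG α β (x * α + y * β) ↔ 0 ≤ y := by
  constructor
  · rintro ⟨x', y', h⟩
    have hc : IsCoprime (β : ℤ) (α : ℤ) := by
      rw [Int.isCoprime_iff_gcd_eq_one]; exact_mod_cast hcop.symm
    have hdvd : (β:ℤ) ∣ (x - x') * α := ⟨y' - y, by linarith [h]⟩
    obtain ⟨k, hk⟩ := hc.dvd_of_dvd_mul_right hdvd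
    have hβ' : (0:ℤ) < β := by exact_mod_cast hβ
    have hx'0 : (0:ℤ) ≤ x' := Int.natCast_nonneg x'
    have hy'0 : (0:ℤ) ≤ y' := Int.natCast_nonneg y'
    have hα0 : (0:ℤ) ≤ α := Int.natCast_nonneg α
    have hk0 : k ≤ 0 := by nlinarith
    have hy : (y':ℤ) - y = k * α := by
      have h0 : (β:ℤ) * ((y' - y) - k * α) = 0 := by nlinarith
      rcases mul_eq_zero.mp h0 with h' | h'
      · linarith
      · linarith
    nlinarith
  · intro hy; exact inG_ofZ hx0 hy

lemma symmG {α β : ℕ} (hβ : 0 < β) (hcop : Nat.Coprime α β) (n : ℤ) :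
    inG α β n ↔ ¬ inG α β ((α:ℤ) * β - α - β - n) := by
  obtain ⟨x, y, hx0, hx1, rfl⟩ := exists_canon hβ hcop n
  have hrw : (α:ℤ) * β - α - β - (x * α + y * β) =
      ((β:ℤ) - 1 - x) * α + (-1 - y) * β := by ring
  rw [hrw, memG_iff hβ hcop hx0 hx1,
    memG_iff hβ hcop (by linarith) (by linarith)]
  omega

lemma inG_big {α β : ℕ} (hβ : 0 < β) (hcop : Nat.Coprime α β) {n : ℤ}
    (h : (α:ℤ) * β - α - β < n) : inG α β n := by
  by_contra hn
  have h2 : inG α β ((α:ℤ) * β - α - β - n) := by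
    by_contra h3; exact hn ((symmG hβ hcop n).mpr h3)
  have := inG_nonneg h2
  linarith

set_option maxHeartbeats 1000000 in
lemma lemA {α β : ℕ} (h1 : 1 < α) (h2 : α < β) (hcop : Nat.Coprime α β)
    {a u v : ℤ} (hu : inG α β u) (hua : inG α β (u - a))
    (hmin : ∀ w : ℤ, inG α β w → inG α β (w - a) → u ≤ w)
    (hv : inG α β v) (hva : inG α β (v - a))
    (hb : u + v - a < (α:ℤ) * β) : inG α β (v - u) := by
  have hβ : 0 < β := by omega
  have hα' : (0:ℤ) < α := by exact_mod_cast (by omega : 0 < α)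
  have hβ' : (0:ℤ) < β := by exact_mod_cast hβ
  obtain ⟨x₀, y₀, hx00, hx01, ha⟩ := exists_canon hβ hcop a
  obtain ⟨x₁, y₁, hx10, hx11, hue⟩ := exists_canon hβ hcop u
  obtain ⟨x₂, y₂, hx20, hx21, hve⟩ := exists_canon hβ hcop v
  have hy1 : 0 ≤ y₁ := (memG_iff hβ hcop hx10 hx11).mp (hue ▸ hu)
  have hy2 : 0 ≤ y₂ := (memG_iff hβ hcop hx20 hx21).mp (hve ▸ hv)
  have hua' : (x₁ ≥ x₀ ∧ y₁ ≥ y₀) ∨ (x₁ < x₀ ∧ y₁ ≥ y₀ + α) := by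
    rcases le_or_gt x₀ x₁ with hc | hc
    · left; refine ⟨hc, ?_⟩
      have he : u - a = (x₁ - x₀) * α + (y₁ - y₀) * β := by rw [hue, ha]; ring
      have := (memG_iff hβ hcop (by linarith) (by linarith)).mp (he ▸ hua)
      linarith
    · right; refine ⟨hc, ?_⟩
      have he : u - a = (x₁ - x₀ + β) * α + (y₁ - y₀ - α) * β := by
        rw [hue, ha]; ring
      have := (memG_iff hβ hcop (by linarith) (by linarith)).mp (he ▸ hua)
      linarith
  have hva' : (x₂ ≥ x₀ ∧ y₂ ≥ y₀) ∨ (x₂ < x₀ ∧ y₂ ≥ y₀ + α) := by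
    rcases le_or_gt x₀ x₂ with hc | hc
    · left; refine ⟨hc, ?_⟩
      have he : v - a = (x₂ - x₀) * α + (y₂ - y₀) * β := by rw [hve, ha]; ring
      have := (memG_iff hβ hcop (by linarith) (by linarith)).mp (he ▸ hva)
      linarith
    · right; refine ⟨hc, ?_⟩
      have he : v - a = (x₂ - x₀ + β) * α + (y₂ - y₀ - α) * β := by
        rw [hve, ha]; ring
      have := (memG_iff hβ hcop (by linarith) (by linarith)).mp (he ▸ hva)
      linarith
  set Y₁ : ℤ := max 0 y₀ with hY1
  set Y₂ : ℤ := max 0 (y₀ + α) with hY2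
  have hY10 : 0 ≤ Y₁ := le_max_left _ _
  have hY1y : y₀ ≤ Y₁ := le_max_right _ _
  have hY20 : 0 ≤ Y₂ := le_max_left _ _
  have hY2y : y₀ + α ≤ Y₂ := le_max_right _ _
  have hle1 : u ≤ x₀ * α + Y₁ * β := by
    apply hmin _ (inG_ofZ hx00 hY10)
    have he : x₀ * α + Y₁ * β - a = 0 * α + (Y₁ - y₀) * β := by rw [ha]; ring
    exact he ▸ inG_ofZ le_rfl (by linarith)
  have hle2 : u ≤ Y₂ * β := by
    apply hmin
    · have he : Y₂ * β = 0 * α + Y₂ * β := by ring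
      exact he ▸ inG_ofZ le_rfl hY20
    · have he : Y₂ * β - a = (β - x₀) * α + (Y₂ - y₀ - α) * β := by rw [ha]; ring
      exact he ▸ inG_ofZ (by linarith) (by linarith)
  rcases hua' with ⟨hx1x0, hy1y0⟩ | ⟨hx1x0, hy1y0⟩
  · have hueq : u = x₀ * α + Y₁ * β := by
      have : x₀ * α + Y₁ * β ≤ u := by
        rw [hue]
        have hY1le : Y₁ ≤ y₁ := by omega
        nlinarith
      linarith
    rcases hva' with ⟨hx2x0, hy2y0⟩ | ⟨hx2x0, hy2y0⟩
    · have he : v - u = (x₂ - x₀) * α + (y₂ - Y₁) * β := by rw [hve, hueq]; ring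
      exact he ▸ inG_ofZ (by linarith) (by omega)
    · rcases le_or_gt 0 y₀ with hy0 | hy0
      · have hY1e : Y₁ = y₀ := by omega
        have he : v - u = (x₂ - x₀ + β) * α + (y₂ - y₀ - α) * β := by
          rw [hve, hueq, hY1e]; ring
        exact he ▸ inG_ofZ (by linarith) (by linarith)
      · exfalso
        have hY1e : Y₁ = 0 := by omega
        have hbb : u + v - a = x₂ * α + (y₂ - y₀) * β := by
          rw [hve, hueq, ha, hY1e]; ring
        nlinarith
  · have hueq : u = Y₂ * β := by
      have : Y₂ * β ≤ u := by
        rw [hue]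
        have hY2le : Y₂ ≤ y₁ := by omega
        nlinarith
      linarith
    rcases le_or_gt Y₂ y₂ with hc | hc
    · have he : v - u = x₂ * α + (y₂ - Y₂) * β := by rw [hve, hueq]; ring
      exact he ▸ inG_ofZ hx20 (by linarith)
    · exfalso
      have hY2e : Y₂ = y₀ + α := by omega
      rcases hva' with ⟨hx2x0, hy2y0⟩ | ⟨hx2x0, hy2y0⟩
      · have hbb : u + v - a = (x₂ - x₀) * α + (α + y₂) * β := by
          rw [hve, hueq, ha, hY2e]; ring
        nlinarith [mul_nonneg (sub_nonneg.mpr hx2x0) hα'.le, mul_nonneg hy2 hβ'.le]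
      · linarith

lemma lemB {α β : ℕ} (h1 : 1 < α) (h2 : α < β) (hcop : Nat.Coprime α β)
    {a u : ℤ} (hu : inG α β u) (hua : inG α β (u - a))
    (hmin : ∀ w : ℤ, inG α β w → inG α β (w - a) → u ≤ w)
    {n : ℤ} (hn : u - ((α:ℤ) + β - 1) ≤ n) :
    (inG α β n ∨ inG α β (n - a)) ↔ inG α β (n - a + u) := by
  have hβ : 0 < β := by omega
  constructor
  · rintro (h | h)
    · have he : n - a + u = n + (u - a) := by ring
      exact he ▸ inG_add h hua
    · exact inG_add h hu
  · intro hG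
    by_contra hC
    push_neg at hC
    obtain ⟨hn1, hn2⟩ := hC
    have hvG : inG α β ((α:ℤ) * β - α - β - n + a) := by
      by_contra h
      exact hn2 ((symmG hβ hcop (n - a)).mpr (by
        have he : (α:ℤ) * β - α - β - (n - a) = (α:ℤ) * β - α - β - n + a := by ring
        rw [he]; exact h))
    have hvaG : inG α β ((α:ℤ) * β - α - β - n + a - a) := by
      have he : (α:ℤ) * β - α - β - n + a - a = (α:ℤ) * β - α - β - n := by ring
      rw [he]
      by_contra h
      exact hn1 ((symmG hβ hcop n).mpr h)
    have hb : u + ((α:ℤ) * β - α - β - n + a) - a < (α:ℤ) * β := by linarith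
    have hAB := lemA h1 h2 hcop hu hua hmin hvG hvaG hb
    have hcontra := (symmG hβ hcop (n - a + u)).mp hG
    apply hcontra
    have he : (α:ℤ) * β - α - β - (n - a + u) =
        (α:ℤ) * β - α - β - n + a - u := by ring
    rw [he]; exact hAB

lemma mem_SG_iff (α β : ℕ) (m : ℕ) : m ∈ SG α β ↔ inG α β m := by
  constructor
  · rintro ⟨x, y, rfl⟩; exact ⟨x, y, by push_cast; ring⟩
  · rintro ⟨x, y, h⟩; exact ⟨x, y, by exact_mod_cast h⟩

lemma mem_shiftN_iff (α β : ℕ) (m x : ℕ) :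
    m ∈ shiftN (SG α β) x ↔ inG α β ((m:ℤ) - x) := by
  constructor
  · rintro ⟨γ, ⟨p, q, rfl⟩, rfl⟩
    exact ⟨p, q, by push_cast; ring⟩
  · rintro ⟨p, q, h⟩
    refine ⟨p * α + q * β, ⟨p, q, rfl⟩, ?_⟩
    have : (m:ℤ) = x + (p * α + q * β : ℕ) := by push_cast; linarith
    exact_mod_cast this

/-- The recursively defined shifts `cᵢ`. -/
noncomputable def cseq (α β : ℕ) (g : ℕ → ℕ) : ℕ → ℤ
  | 0 => 0
  | i + 1 => cseq α β g i + (g (i + 1) : ℤ) - (uval (SG α β) g (i + 1) : ℤ)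

theorem increasing_semimodule_cs_lemma (α β s : ℕ) (h1 : 1 < α) (h2 : α < β)
    (hcop : Nat.Coprime α β) (g : ℕ → ℕ) (hg0 : g 0 = 0)
    (hmono : ∀ i j, i < j → j ≤ s → g i < g j)
    (Δ : Set ℕ)
    (hgen : GeneratesBy (SG α β) (g '' Set.Iic s) Δ)
    (hminimal : ∀ E' ⊂ g '' Set.Iic s, ¬ GeneratesBy (SG α β) E' Δ)
    (hinc : ∀ i, i < s → uval (SG α β) g i < g (i + 1)) :
    ∃ c : ℕ → ℤ, c 0 = 0 ∧
      (∀ i, 1 ≤ i → i ≤ s - 1 →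
        c i = c (i - 1) + (g i : ℤ) - (uval (SG α β) g i : ℤ)) ∧
      ∀ i, i ≤ s - 1 →
        (∃ γ ∈ SG α β, c i = -(γ : ℤ)) ∧
        {n : ℤ | (uval (SG α β) g i : ℤ) + ((α : ℤ) - 1) * ((β : ℤ) - 1)
              - (α : ℤ) * β ≤ n} ∩
            {n : ℤ | ∃ m : ℕ, (∃ j ≤ i, m ∈ shiftN (SG α β) (g j)) ∧ n = m} =
          {n : ℤ | (uval (SG α β) g i : ℤ) + ((α : ℤ) - 1) * ((β : ℤ) - 1)
              - (α : ℤ) * β ≤ n} ∩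
            {n : ℤ | ∃ γ ∈ SG α β, n = (γ : ℤ) + c i} := by
  have hβ : 0 < β := by omega
  have key : ∀ i, i ≤ s - 1 → inG α β (-(cseq α β g i)) ∧
      ∀ n : ℤ, (uval (SG α β) g i : ℤ) - ((α:ℤ) + β - 1) ≤ n →
        ((∃ j ≤ i, inG α β (n - g j)) ↔ inG α β (n - cseq α β g i)) := by
    intro i
    induction i with
    | zero =>
      intro _
      constructor
      · exact ⟨0, 0, by simp [cseq]⟩
      · intro n hn
        constructor
        · rintro ⟨j, hj, hG⟩
          have hj0 : j = 0 := Nat.le_zero.mp hj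
          subst hj0
          rw [hg0] at hG
          simpa [cseq] using hG
        · intro hG
          exact ⟨0, le_refl 0, by rw [hg0]; simpa [cseq] using hG⟩
    | succ i ih =>
      intro hi1
      have his : i < s := by omega
      obtain ⟨ihc, ihE⟩ := ih (by omega)
      set M := shiftN (SG α β) (g (i + 1)) ∩
        {n | ∃ j ≤ i, n ∈ shiftN (SG α β) (g j)} with hM
      obtain ⟨U, hU⟩ : ∃ U, U = uval (SG α β) g (i + 1) := ⟨_, rfl⟩
      have hUeq : U = sInf M := hU
      have hne : (g (i + 1) + α * β) ∈ M := by
        constructor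
        · rw [mem_shiftN_iff]
          refine ⟨0, α, by push_cast; ring⟩
        · refine ⟨0, Nat.zero_le i, ?_⟩
          rw [mem_shiftN_iff, hg0]
          apply inG_big hβ hcop
          have hα' : (0:ℤ) < α := by exact_mod_cast (by omega : 0 < α)
          have hβ' : (0:ℤ) < β := by exact_mod_cast hβ
          push_cast
          have : (0:ℤ) ≤ g (i + 1) := Int.natCast_nonneg _
          linarith
      have hUmem : U ∈ M := by rw [hUeq]; exact Nat.sInf_mem ⟨_, hne⟩
      obtain ⟨hU1, hU2⟩ := hUmem
      have hUa : inG α β ((U:ℤ) - g (i + 1)) := (mem_shiftN_iff α β U _).mp hU1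
      have hUge : (g (i + 1):ℤ) ≤ (U:ℤ) := by
        have := inG_nonneg hUa; linarith
      have hui : (uval (SG α β) g i : ℤ) < (g (i + 1):ℤ) := by
        exact_mod_cast hinc i his
      have hUc : inG α β ((U:ℤ) - cseq α β g i) := by
        apply (ihE (U:ℤ) (by linarith)).mp
        obtain ⟨j, hj, hjm⟩ := hU2
        exact ⟨j, hj, (mem_shiftN_iff α β U _).mp hjm⟩
      have hminz : ∀ w : ℤ, inG α β w →
          inG α β (w - ((g (i + 1):ℤ) - cseq α β g i)) →
          (U:ℤ) - cseq α β g i ≤ w := by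
        intro w hw hwa
        have hwa' : inG α β ((w + cseq α β g i) - g (i + 1)) := by
          have he : (w + cseq α β g i) - g (i + 1) =
              w - ((g (i + 1):ℤ) - cseq α β g i) := by ring
          rw [he]; exact hwa
        have hm'ge : (g (i + 1):ℤ) ≤ w + cseq α β g i := by
          have := inG_nonneg hwa'; linarith
        have hm'E : ∃ j ≤ i, inG α β ((w + cseq α β g i) - g j) := by
          apply (ihE (w + cseq α β g i) (by linarith)).mpr
          have he : (w + cseq α β g i) - cseq α β g i = w := by ring
          rw [he]; exact hw
        have hm'0 : (0:ℤ) ≤ w + cseq α β g i := by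
          have : (0:ℤ) ≤ g (i + 1) := Int.natCast_nonneg _
          linarith
        have hmm : ((w + cseq α β g i).toNat : ℤ) = w + cseq α β g i :=
          Int.toNat_of_nonneg hm'0
        have hmem : (w + cseq α β g i).toNat ∈ M := by
          constructor
          · rw [mem_shiftN_iff, hmm]; exact hwa'
          · obtain ⟨j, hj, hjG⟩ := hm'E
            exact ⟨j, hj, by rw [mem_shiftN_iff, hmm]; exact hjG⟩
          
        have hle : U ≤ (w + cseq α β g i).toNat := by
          rw [hUeq]; exact Nat.sInf_le hmem
        have : (U:ℤ) ≤ w + cseq α β g i := by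
          rw [← hmm]; exact_mod_cast hle
        linarith
      have hua' : inG α β (((U:ℤ) - cseq α β g i) -
          ((g (i + 1):ℤ) - cseq α β g i)) := by
        have he : ((U:ℤ) - cseq α β g i) - ((g (i + 1):ℤ) - cseq α β g i) =
            (U:ℤ) - g (i + 1) := by ring
        rw [he]; exact hUa
      constructor
      · have he : -(cseq α β g (i + 1)) =
            (-(cseq α β g i)) + ((U:ℤ) - g (i + 1)) := by
          simp only [cseq]; rw [← hU]; ring
        rw [he]; exact inG_add ihc hUa
      · intro n hn
        have hnB := lemB h1 h2 hcop hUc hua' hminz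
          (n := n - cseq α β g i) (by linarith)
        have e1 : n - cseq α β g i - ((g (i + 1):ℤ) - cseq α β g i) =
            n - g (i + 1) := by ring
        have e2 : n - (g (i + 1):ℤ) +
            ((U:ℤ) - cseq α β g i) = n - cseq α β g (i + 1) := by
          simp only [cseq]; rw [← hU]; ring
        rw [e1, e2] at hnB
        have ihEn := ihE n (by linarith)
        constructor
        · rintro ⟨j, hj, hG⟩
          rcases Nat.lt_or_ge j (i + 1) with hj' | hj'
          · exact hnB.mp (Or.inl (ihEn.mp ⟨j, by omega, hG⟩))
          · have hje : j = i + 1 := by omega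
            subst hje
            exact hnB.mp (Or.inr hG)
        · intro hG
          rcases hnB.mpr hG with h | h
          · obtain ⟨j, hj, hjG⟩ := ihEn.mpr h
            exact ⟨j, by omega, hjG⟩
          · exact ⟨i + 1, le_refl _, h⟩
  refine ⟨cseq α β g, rfl, ?_, ?_⟩
  · intro i hi1 hi2
    obtain ⟨k, rfl⟩ : ∃ k, i = k + 1 := ⟨i - 1, by omega⟩
    simp [cseq]
  · intro i hi
    obtain ⟨hcG, hE⟩ := key i hi
    constructor
    · obtain ⟨x, y, hxy⟩ := hcG
      refine ⟨x * α + y * β, ⟨x, y, rfl⟩, ?_⟩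
      push_cast
      linarith
    · ext n
      simp only [Set.mem_inter_iff, Set.mem_setOf_eq]
      have hb : (uval (SG α β) g i : ℤ) + ((α:ℤ) - 1) * ((β:ℤ) - 1) -
          (α:ℤ) * β = (uval (SG α β) g i : ℤ) - ((α:ℤ) + β - 1) := by ring
      constructor
      · rintro ⟨hge, m, ⟨j, hj, hjm⟩, rfl⟩
        refine ⟨hge, ?_⟩
        have hG : inG α β ((m:ℤ) - cseq α β g i) :=
          (hE (m:ℤ) (by rw [hb] at hge; exact hge)).mp
            ⟨j, hj, (mem_shiftN_iff α β m _).mp hjm⟩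
        obtain ⟨x, y, hxy⟩ := hG
        refine ⟨x * α + y * β, ⟨x, y, rfl⟩, ?_⟩
        push_cast
        push_cast at hxy
        linarith
      · rintro ⟨hge, γ, hγS, hn⟩
        refine ⟨hge, ?_⟩
        have hG : inG α β (n - cseq α β g i) := by
          obtain ⟨x, y, hxy⟩ := hγS
          exact ⟨x, y, by rw [hn, hxy]; push_cast; ring⟩
        obtain ⟨j, hj, hjG⟩ := (hE n (by rw [hb] at hge; exact hge)).mpr hG
        have hn0 : (0:ℤ) ≤ n := by
          have h1' := inG_nonneg hjG
          have h2' : (0:ℤ) ≤ g j := Int.natCast_nonneg _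
          linarith
        refine ⟨n.toNat, ⟨j, hj, ?_⟩, (Int.toNat_of_nonneg hn0).symm⟩
        rw [mem_shiftN_iff, Int.toNat_of_nonneg hn0]
        exact hjG
end
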